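/- arXiv:2506.18649 — 5 statements merged into one kernel-verified Lean document; each statement's English description precedes it below -/
import Mathlib

section
/- Let d ≥ 1, Δx > 0 and c¹,…,c^d > 0. The semi-discrete heat kernel a_α(t) := Δx^{−d} ∏_{j=1}^d e^{−r^j} I_{α^j}(r^j), with r^j := 2c^j t/Δx², satisfies: for each fixed α ∈ ℤ^d the map t ↦ a_α(t) is continuous on [0,∞) and continuously differentiable on (0,∞); a_α(0) = Δx^{−d} if α = 0 and a_α(0) = 0 otherwise; and for all t > 0 and all α ∈ ℤ^d, (d/dt) a_α(t) = Σ_{j=1}^d c^j (a_{α+e_j}(t) − 2 a_α(t) + a_{α−e_j}(t)) / Δx². -/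
open scoped BigOperators

/-- Modified Bessel function of the first kind of integer order,
`I_n(r) = Σ_{k≥0} (1/(k!(k+|n|)!)) (r/2)^{2k+|n|}`, with `I_{-n} = I_n`. -/
noncomputable def besselI (n : ℤ) (r : ℝ) : ℝ :=
  ∑' k : ℕ, (1 / ((Nat.factorial k : ℝ) * (Nat.factorial (k + n.natAbs) : ℝ)))
    * (r / 2) ^ (2 * k + n.natAbs)

/-- The semi-discrete heat kernel `a_α(t) = Δx^{-d} ∏_j e^{-r^j} I_{α^j}(r^j)`,
`r^j = 2 c^j t / Δx²`. -/
noncomputable def heatKernel (d : ℕ) (Δx : ℝ) (c : Fin d → ℝ) (α : Fin d → ℤ) (t : ℝ) : ℝ :=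
  (Δx ^ d)⁻¹ * ∏ j : Fin d,
    Real.exp (-(2 * c j * t / Δx ^ 2)) * besselI (α j) (2 * c j * t / Δx ^ 2)

noncomputable def J (m : ℕ) (r : ℝ) : ℝ :=
  ∑' k : ℕ, (1 / ((Nat.factorial k : ℝ) * (Nat.factorial (k + m) : ℝ))) * (r / 2) ^ (2 * k + m)

noncomputable def gd (m k : ℕ) (y : ℝ) : ℝ :=
  (1 / ((Nat.factorial k : ℝ) * (Nat.factorial (k + m) : ℝ))) *
    (((2 * k + m : ℕ) : ℝ) * (y / 2) ^ (2 * k + m - 1) * (1 / 2))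

lemma gd_bound (m : ℕ) (R : ℝ) (hR : 0 ≤ R) (k : ℕ) (y : ℝ) (hy : |y| ≤ R) :
    ‖gd m k y‖ ≤ ((R + 2) ^ 2) ^ k / (Nat.factorial k : ℝ) * (R + 2) ^ m := by
  set p := 2 * k + m with hp
  have hX : (1:ℝ) ≤ R / 2 + 1 := by linarith
  have hy2 : |y / 2| ≤ R / 2 + 1 := by
    rw [abs_div]; simp only [abs_two]
    rw [div_le_iff₀ (by norm_num : (0:ℝ) < 2)]
    nlinarith [abs_nonneg y]
  have h1 : |y / 2| ^ (p - 1) ≤ (R / 2 + 1) ^ p := by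
    calc |y / 2| ^ (p - 1) ≤ (R / 2 + 1) ^ (p - 1) := by gcongr <;> positivity
      _ ≤ (R / 2 + 1) ^ p := pow_le_pow_right₀ hX (Nat.sub_le p 1)
  have h2 : (p : ℝ) ≤ 2 ^ p := by exact_mod_cast (Nat.lt_two_pow_self).le
  have hb : |1 / ((Nat.factorial k : ℝ) * (Nat.factorial (k + m) : ℝ))|
      ≤ 1 / (Nat.factorial k : ℝ) := by
    have h1' : (0:ℝ) < (Nat.factorial k : ℝ) := by positivity
    have h2' : (1:ℝ) ≤ (Nat.factorial (k + m) : ℝ) := by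
      exact_mod_cast Nat.one_le_iff_ne_zero.2 (Nat.factorial_ne_zero _)
    rw [abs_of_nonneg (by positivity), div_le_div_iff₀ (by positivity) h1']
    nlinarith
  have hA : (p : ℝ) * |y / 2| ^ (p - 1) * (1 / 2) ≤ (2:ℝ) ^ p * (R / 2 + 1) ^ p := by
    have hmm := mul_le_mul h2 h1 (by positivity) (by positivity)
    have hnn : (0:ℝ) ≤ (p : ℝ) * |y / 2| ^ (p - 1) := by positivity
    linarith
  have key : ‖gd m k y‖ ≤ 1 / (Nat.factorial k : ℝ) * ((2:ℝ) ^ p * (R / 2 + 1) ^ p) := by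
    rw [gd, norm_mul, norm_mul, norm_mul, Real.norm_eq_abs, Real.norm_eq_abs,
      Real.norm_eq_abs, Real.norm_eq_abs, abs_pow]
    rw [abs_of_nonneg (by positivity : (0:ℝ) ≤ (p:ℝ)), show |(1:ℝ)/2| = 1/2 by norm_num]
    exact mul_le_mul hb hA (by positivity) (by positivity)
  calc ‖gd m k y‖ ≤ 1 / (Nat.factorial k : ℝ) * ((2:ℝ) ^ p * (R / 2 + 1) ^ p) := key
    _ = ((R + 2) ^ 2) ^ k / (Nat.factorial k : ℝ) * (R + 2) ^ m := by
        rw [← mul_pow, show (2:ℝ) * (R / 2 + 1) = R + 2 by ring, hp, pow_add, pow_mul]; ring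

lemma term_hasDerivAt (m k : ℕ) (y : ℝ) :
    HasDerivAt (fun z : ℝ => (1 / ((Nat.factorial k : ℝ) * (Nat.factorial (k + m) : ℝ)))
      * (z / 2) ^ (2 * k + m)) (gd m k y) y := by
  have h : HasDerivAt (fun z : ℝ => (z / 2) ^ (2 * k + m))
      (((2 * k + m : ℕ) : ℝ) * (y / 2) ^ (2 * k + m - 1) * (1 / 2)) y := by
    have h0 : HasDerivAt (fun z : ℝ => z / 2) (1 / 2) y := by
      simpa using (hasDerivAt_id y).div_const 2
    simpa [Pi.pow_def] using h0.pow (2 * k + m)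
  simpa [gd, mul_assoc] using h.const_mul (1 / ((Nat.factorial k : ℝ) * (Nat.factorial (k + m) : ℝ)))

lemma gd_summable (m : ℕ) (y : ℝ) : Summable (fun k => gd m k y) := by
  apply Summable.of_norm_bounded
    (((Real.summable_pow_div_factorial ((|y| + 2) ^ 2)).mul_right ((|y| + 2) ^ m)))
  exact fun k => gd_bound m |y| (abs_nonneg y) k y le_rfl

lemma J_summable' (m : ℕ) (r : ℝ) :
    Summable (fun k : ℕ => (1 / ((Nat.factorial k : ℝ) * (Nat.factorial (k + m) : ℝ)))
      * (r / 2) ^ (2 * k + m)) := by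
  apply Summable.of_norm_bounded (((Real.summable_pow_div_factorial (|r/2|^2)).mul_right (|r/2|^m)))
  intro k
  have h1 : (0:ℝ) < (Nat.factorial k : ℝ) := by positivity
  have h2 : (1:ℝ) ≤ (Nat.factorial (k + m) : ℝ) := by
    exact_mod_cast Nat.one_le_iff_ne_zero.2 (Nat.factorial_ne_zero _)
  rw [norm_mul, norm_pow, Real.norm_eq_abs, Real.norm_eq_abs]
  have hb : |1 / ((Nat.factorial k : ℝ) * (Nat.factorial (k + m) : ℝ))| ≤ 1 / (Nat.factorial k : ℝ) := by
    rw [abs_of_nonneg (by positivity), div_le_div_iff₀ (by positivity) h1]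
    nlinarith
  calc |1 / ((Nat.factorial k : ℝ) * (Nat.factorial (k + m) : ℝ))| * |r / 2| ^ (2 * k + m)
      ≤ 1 / (Nat.factorial k : ℝ) * |r / 2| ^ (2 * k + m) := by gcongr
    _ = (|r / 2| ^ 2) ^ k / (Nat.factorial k : ℝ) * |r / 2| ^ m := by
        rw [pow_add, pow_mul]; ring

lemma J_hasDerivAt_aux (m : ℕ) (r : ℝ) :
    HasDerivAt (J m) (∑' k, gd m k r) r := by
  have hR : (0:ℝ) < |r| + 1 := by positivity
  have := hasDerivAt_tsum_of_isPreconnected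
    (u := fun k => (((|r| + 1) + 2) ^ 2) ^ k / (Nat.factorial k : ℝ) * ((|r| + 1) + 2) ^ m)
    (t := Set.Ioo (-(|r| + 1)) (|r| + 1))
    (g := fun k z => (1 / ((Nat.factorial k : ℝ) * (Nat.factorial (k + m) : ℝ)))
      * (z / 2) ^ (2 * k + m))
    (g' := fun k z => gd m k z) (y₀ := 0) (y := r)
    (((Real.summable_pow_div_factorial (((|r| + 1) + 2) ^ 2)).mul_right (((|r| + 1) + 2) ^ m)))
    isOpen_Ioo isPreconnected_Ioo
    (fun k z _ => term_hasDerivAt m k z)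
    (fun k z hz => gd_bound m (|r| + 1) (by positivity) k z
      (le_of_lt (abs_lt.2 ⟨hz.1, hz.2⟩)))
    (Set.mem_Ioo.2 ⟨by linarith, by linarith⟩)
    (J_summable' m 0)
    (Set.mem_Ioo.2 ⟨by linarith [neg_abs_le r], by linarith [le_abs_self r]⟩)
  exact this

lemma tsum_gd_zero (r : ℝ) : ∑' k, gd 0 k r = J 1 r := by
  rw [Summable.tsum_eq_zero_add (gd_summable 0 r)]
  have h0 : gd 0 0 r = 0 := by simp [gd]
  rw [h0, zero_add, J]
  apply tsum_congr
  intro k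
  have he : 2 * (k + 1) + 0 - 1 = 2 * k + 1 := by omega
  rw [gd, he]
  simp only [show k + 1 + 0 = k + 1 from by omega, Nat.factorial_succ,
    show 2 * (k + 1) + 0 = 2 * k + 2 from by omega]
  have h1 : (0:ℝ) < (Nat.factorial k : ℝ) := by positivity
  push_cast
  field_simp

lemma tsum_gd_succ (m' : ℕ) (r : ℝ) :
    ∑' k, gd (m' + 1) k r = (J m' r + J (m' + 2) r) / 2 := by
  set A : ℕ → ℝ := fun k => (1 / ((Nat.factorial k : ℝ) * (Nat.factorial (k + m') : ℝ)))
    * (r / 2) ^ (2 * k + m') with hA'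
  set B : ℕ → ℝ := fun k => ((k : ℝ) / ((Nat.factorial k : ℝ) * (Nat.factorial (k + m' + 1) : ℝ)))
    * (r / 2) ^ (2 * k + m') with hB'
  have hpt : ∀ k, gd (m' + 1) k r = (A k + B k) / 2 := by
    intro k
    have he : 2 * k + (m' + 1) - 1 = 2 * k + m' := by omega
    rw [gd, he, hA', hB']
    simp only [show k + (m' + 1) = k + m' + 1 from by omega, Nat.factorial_succ]
    have h1 : (0:ℝ) < (Nat.factorial k : ℝ) := by positivity
    have h2 : (0:ℝ) < (Nat.factorial (k + m') : ℝ) := by positivity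
    push_cast
    field_simp
    ring
  have hA : Summable A := J_summable' m' r
  have hB : Summable B := by
    have hfe : B = fun k => 2 * gd (m' + 1) k r - A k := by
      funext k; rw [hpt k]; ring
    rw [hfe]
    exact ((gd_summable (m' + 1) r).mul_left 2).sub hA
  have hBsum : ∑' k, B k = J (m' + 2) r := by
    rw [Summable.tsum_eq_zero_add hB]
    have hB0 : B 0 = 0 := by simp [hB']
    rw [hB0, zero_add, J]
    apply tsum_congr
    intro k
    rw [hB']
    simp only [show 2 * (k + 1) + m' = 2 * k + (m' + 2) from by omega,
      show k + 1 + m' + 1 = (k + (m' + 2)) from by omega, Nat.factorial_succ]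
    have h1 : (0:ℝ) < (Nat.factorial k : ℝ) := by positivity
    have h2 : (0:ℝ) < (Nat.factorial (k + (m' + 2)) : ℝ) := by positivity
    push_cast
    field_simp
  calc ∑' k, gd (m' + 1) k r = ∑' k, (A k + B k) / 2 := tsum_congr hpt
    _ = (∑' k, (A k + B k)) / 2 := by rw [tsum_div_const]
    _ = (∑' k, A k + ∑' k, B k) / 2 := by rw [Summable.tsum_add hA hB]
    _ = (J m' r + J (m' + 2) r) / 2 := by rw [hBsum]; rfl

lemma besselI_eq_J (n : ℤ) : besselI n = J n.natAbs := rfl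

lemma besselI_hasDerivAt (n : ℤ) (r : ℝ) :
    HasDerivAt (besselI n) ((besselI (n - 1) r + besselI (n + 1) r) / 2) r := by
  simp only [besselI_eq_J]
  rcases eq_or_ne n 0 with rfl | hn
  · have h := J_hasDerivAt_aux 0 r
    rw [tsum_gd_zero r] at h
    have e1 : ((0:ℤ) - 1).natAbs = 1 := rfl
    have e2 : ((0:ℤ) + 1).natAbs = 1 := rfl
    rw [e1, e2, show (J 1 r + J 1 r) / 2 = J 1 r by ring]
    exact h
  · obtain ⟨m', hm⟩ : ∃ m', n.natAbs = m' + 1 := ⟨n.natAbs - 1, by omega⟩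
    have h := J_hasDerivAt_aux (m' + 1) r
    rw [tsum_gd_succ] at h
    rcases lt_or_gt_of_ne hn with hneg | hpos
    · have e1 : (n - 1).natAbs = m' + 2 := by omega
      have e2 : (n + 1).natAbs = m' := by omega
      rw [hm, e1, e2, show (J (m' + 2) r + J m' r) = (J m' r + J (m' + 2) r) from add_comm _ _]
      exact h
    · have e1 : (n - 1).natAbs = m' := by omega
      have e2 : (n + 1).natAbs = m' + 2 := by omega
      rw [hm, e1, e2]
      exact h

lemma besselI_zero (n : ℤ) : besselI n 0 = if n = 0 then 1 else 0 := by
  rw [besselI_eq_J]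
  have : J n.natAbs 0 = if n.natAbs = 0 then 1 else 0 := by
    rcases Nat.eq_zero_or_pos n.natAbs with h | h
    · rw [h, if_pos rfl, J]
      rw [tsum_eq_single 0 ?_]
      · norm_num
      · intro b hb
        have : (0:ℝ) / 2 = 0 := by norm_num
        rw [this, zero_pow (by omega : 2 * b + 0 ≠ 0), mul_zero]
    · rw [if_neg (by omega), J]
      have : ∀ k : ℕ, (1 / ((Nat.factorial k : ℝ) * (Nat.factorial (k + n.natAbs) : ℝ)))
          * ((0:ℝ) / 2) ^ (2 * k + n.natAbs) = 0 := by
        intro k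
        rw [show (0:ℝ)/2 = 0 by norm_num, zero_pow (by omega : 2 * k + n.natAbs ≠ 0), mul_zero]
      rw [tsum_congr this, tsum_zero]
  rw [this]
  simp [Int.natAbs_eq_zero]

lemma besselI_continuous (n : ℤ) : Continuous (besselI n) := by
  have : Differentiable ℝ (besselI n) := fun r => (besselI_hasDerivAt n r).differentiableAt
  exact this.continuous

section HK
variable (d : ℕ) (Δx : ℝ) (c : Fin d → ℝ) (α : Fin d → ℤ)

lemma factor_hasDerivAt (j : Fin d) (n : ℤ) (t : ℝ) :
    HasDerivAt (fun s : ℝ => Real.exp (-(2 * c j * s / Δx ^ 2)) * besselI n (2 * c j * s / Δx ^ 2))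
      (-(2 * c j / Δx ^ 2) * Real.exp (-(2 * c j * t / Δx ^ 2)) * besselI n (2 * c j * t / Δx ^ 2)
        + Real.exp (-(2 * c j * t / Δx ^ 2)) *
          ((besselI (n - 1) (2 * c j * t / Δx ^ 2) + besselI (n + 1) (2 * c j * t / Δx ^ 2)) / 2
            * (2 * c j / Δx ^ 2))) t := by
  have hu : HasDerivAt (fun s : ℝ => 2 * c j * s / Δx ^ 2) (2 * c j / Δx ^ 2) t := by
    have := ((hasDerivAt_id t).const_mul (2 * c j)).div_const (Δx ^ 2)
    simpa using this
  have hexp : HasDerivAt (fun s : ℝ => Real.exp (-(2 * c j * s / Δx ^ 2)))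
      (-(2 * c j / Δx ^ 2) * Real.exp (-(2 * c j * t / Δx ^ 2))) t := by
    have := (hu.neg).exp
    simpa [mul_comm] using this
  have hbes : HasDerivAt (fun s : ℝ => besselI n (2 * c j * s / Δx ^ 2))
      ((besselI (n - 1) (2 * c j * t / Δx ^ 2) + besselI (n + 1) (2 * c j * t / Δx ^ 2)) / 2
        * (2 * c j / Δx ^ 2)) t :=
    by have := (besselI_hasDerivAt n (2 * c j * t / Δx ^ 2)).comp t hu; exact this
  simpa [mul_assoc, mul_comm, mul_left_comm, Pi.mul_def] using hexp.mul hbes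

lemma heatKernel_hasDerivAt (hΔx : Δx ≠ 0) (t : ℝ) :
    HasDerivAt (fun s => heatKernel d Δx c α s)
      (∑ j : Fin d, c j * (heatKernel d Δx c (α + Pi.single j 1) t
        - 2 * heatKernel d Δx c α t + heatKernel d Δx c (α - Pi.single j 1) t) / Δx ^ 2) t := by
  classical
  set F : Fin d → ℝ → ℝ := fun j s =>
    Real.exp (-(2 * c j * s / Δx ^ 2)) * besselI (α j) (2 * c j * s / Δx ^ 2) with hF
  set F' : Fin d → ℝ := fun j =>
    -(2 * c j / Δx ^ 2) * Real.exp (-(2 * c j * t / Δx ^ 2)) * besselI (α j) (2 * c j * t / Δx ^ 2)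
      + Real.exp (-(2 * c j * t / Δx ^ 2)) *
        ((besselI (α j - 1) (2 * c j * t / Δx ^ 2) + besselI (α j + 1) (2 * c j * t / Δx ^ 2)) / 2
          * (2 * c j / Δx ^ 2)) with hF'
  have hprod : HasDerivAt (fun s => ∏ j : Fin d, F j s)
      (∑ j : Fin d, (∏ i ∈ Finset.univ.erase j, F i t) • F' j) t :=
    HasDerivAt.fun_finsetProd (fun j _ => factor_hasDerivAt d Δx c j (α j) t)
  have hmain := hprod.const_mul ((Δx ^ d)⁻¹ : ℝ)
  have hfun : (fun s => (Δx ^ d)⁻¹ * ∏ j : Fin d, F j s) = fun s => heatKernel d Δx c α s := rfl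
  rw [hfun] at hmain
  convert hmain using 1
  case e'_4 => rfl
  case e'_5 => rfl
  rw [Finset.mul_sum]
  apply Finset.sum_congr rfl
  intro j _
  -- expand the shifted heat kernels
  have hsplit : ∀ β : Fin d → ℤ, (∀ i, i ≠ j → β i = α i) →
      heatKernel d Δx c β t = (Δx ^ d)⁻¹ *
        ((Real.exp (-(2 * c j * t / Δx ^ 2)) * besselI (β j) (2 * c j * t / Δx ^ 2)) *
          ∏ i ∈ Finset.univ.erase j, F i t) := by
    intro β hβ
    rw [heatKernel, ← Finset.mul_prod_erase Finset.univ _ (Finset.mem_univ j)]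
    congr 1
    congr 1
    apply Finset.prod_congr rfl
    intro i hi
    rw [hβ i (Finset.ne_of_mem_erase hi)]
  have h1 : heatKernel d Δx c (α + Pi.single j 1) t = (Δx ^ d)⁻¹ *
      ((Real.exp (-(2 * c j * t / Δx ^ 2)) * besselI (α j + 1) (2 * c j * t / Δx ^ 2)) *
        ∏ i ∈ Finset.univ.erase j, F i t) := by
    have := hsplit (α + Pi.single j 1) (fun i hi => by simp [Pi.single_eq_of_ne hi])
    have hj : (α + Pi.single j 1 : Fin d → ℤ) j = α j + 1 := by simp
    rwa [hj] at this
  have h2 : heatKernel d Δx c α t = (Δx ^ d)⁻¹ *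
      ((Real.exp (-(2 * c j * t / Δx ^ 2)) * besselI (α j) (2 * c j * t / Δx ^ 2)) *
        ∏ i ∈ Finset.univ.erase j, F i t) := hsplit α (fun _ _ => rfl)
  have h3 : heatKernel d Δx c (α - Pi.single j 1) t = (Δx ^ d)⁻¹ *
      ((Real.exp (-(2 * c j * t / Δx ^ 2)) * besselI (α j - 1) (2 * c j * t / Δx ^ 2)) *
        ∏ i ∈ Finset.univ.erase j, F i t) := by
    have := hsplit (α - Pi.single j 1) (fun i hi => by simp [Pi.single_eq_of_ne hi])
    have hj : (α - Pi.single j 1 : Fin d → ℤ) j = α j - 1 := by simp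
    rwa [hj] at this
  rw [h1, h2, h3, hF', smul_eq_mul]
  have hΔ2 : (Δx:ℝ) ^ 2 ≠ 0 := pow_ne_zero 2 hΔx
  field_simp
  ring
end HK

theorem stmt0 (d : ℕ) (hd : 1 ≤ d) (Δx : ℝ) (hΔx : 0 < Δx)
    (c : Fin d → ℝ) (hc : ∀ j, 0 < c j) (α : Fin d → ℤ) :
    ContinuousOn (fun t => heatKernel d Δx c α t) (Set.Ici 0) ∧
    ContDiffOn ℝ 1 (fun t => heatKernel d Δx c α t) (Set.Ioi 0) ∧
    heatKernel d Δx c α 0 = (if α = 0 then (Δx ^ d)⁻¹ else 0) ∧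
    (∀ t : ℝ, 0 < t →
      HasDerivAt (fun s => heatKernel d Δx c α s)
        (∑ j : Fin d, c j * (heatKernel d Δx c (α + Pi.single j 1) t
          - 2 * heatKernel d Δx c α t + heatKernel d Δx c (α - Pi.single j 1) t) / Δx ^ 2) t) := by
  have hΔ : Δx ≠ 0 := ne_of_gt hΔx
  have hdiff : ∀ β : Fin d → ℤ, Differentiable ℝ (fun t => heatKernel d Δx c β t) :=
    fun β t => (heatKernel_hasDerivAt d Δx c β hΔ t).differentiableAt
  have hderiv : deriv (fun t => heatKernel d Δx c α t) = fun t =>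
      ∑ j : Fin d, c j * (heatKernel d Δx c (α + Pi.single j 1) t
        - 2 * heatKernel d Δx c α t + heatKernel d Δx c (α - Pi.single j 1) t) / Δx ^ 2 :=
    funext fun t => (heatKernel_hasDerivAt d Δx c α hΔ t).deriv
  have hcont : Continuous (deriv (fun t => heatKernel d Δx c α t)) := by
    rw [hderiv]
    apply continuous_finset_sum
    intro j _
    exact ((continuous_const.mul (((hdiff _).continuous.sub
      (continuous_const.mul (hdiff α).continuous)).add (hdiff _).continuous)).div_const _)
  have hC1 : ContDiff ℝ 1 (fun t => heatKernel d Δx c α t) :=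
    contDiff_one_iff_deriv.2 ⟨hdiff α, hcont⟩
  refine ⟨((hdiff α).continuous).continuousOn, hC1.contDiffOn, ?_,
    fun t _ => heatKernel_hasDerivAt d Δx c α hΔ t⟩
  rw [heatKernel]
  have hfac : ∀ j : Fin d, Real.exp (-(2 * c j * 0 / Δx ^ 2))
      * besselI (α j) (2 * c j * 0 / Δx ^ 2) = if α j = 0 then 1 else 0 := by
    intro j
    rw [mul_zero, zero_div, neg_zero, Real.exp_zero, one_mul, besselI_zero]
  rw [Finset.prod_congr rfl (fun j _ => hfac j)]
  by_cases h : α = 0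
  · rw [if_pos h]
    have : ∀ j : Fin d, α j = 0 := fun j => by rw [h]; rfl
    rw [Finset.prod_congr rfl (fun j _ => if_pos (this j)), Finset.prod_const_one, mul_one]
  · rw [if_neg h]
    obtain ⟨j, hj⟩ : ∃ j, α j ≠ 0 := by
      by_contra hcj; push_neg at hcj; exact h (funext hcj)
    rw [Finset.prod_eq_zero (Finset.mem_univ j) (show (if α j = 0 then (1:ℝ) else 0) = 0 from if_neg hj), mul_zero]
end

section
/- Let d ≥ 1, Δx > 0, c¹,…,c^d > 0, and let a_α(t) := Δx^{−d} ∏_{j=1}^d e^{−r^j} I_{α^j}(r^j) with r^j := 2c^j t/Δx². Then: (i) a_α(t) > 0 for all α ∈ ℤ^d and t > 0; (ii) Σ_{α∈ℤ^d} a_α(t) Δx^d = 1 for all t ≥ 0; (iii) for every p ∈ [1,∞) and every t > 0, (Σ_{α∈ℤ^d} |a_α(t)|^p Δx^d)^{1/p} ≤ (Σ_{α∈ℤ^d} |a_α(0)|^p Δx^d)^{1/p} = Δx^{d/p − d}, and likewise sup_{α∈ℤ^d} |a_α(t)| ≤ sup_{α∈ℤ^d} |a_α(0)| = Δx^{−d}.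 -/
open scoped BigOperators

lemma besselI_term_nonneg (n : ℤ) (r : ℝ) (hr : 0 ≤ r) (k : ℕ) :
    0 ≤ (1 / ((Nat.factorial k : ℝ) * (Nat.factorial (k + n.natAbs) : ℝ)))
      * (r / 2) ^ (2 * k + n.natAbs) := by positivity

lemma summable_besselI_term (n : ℤ) (r : ℝ) (hr : 0 ≤ r) :
    Summable fun k : ℕ => (1 / ((Nat.factorial k : ℝ) * (Nat.factorial (k + n.natAbs) : ℝ)))
      * (r / 2) ^ (2 * k + n.natAbs) := by
  set m := n.natAbs
  have hb : Summable fun k : ℕ => (r / 2) ^ m * (((r / 2) ^ 2) ^ k / (Nat.factorial k : ℝ)) :=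
    (Real.summable_pow_div_factorial ((r / 2) ^ 2)).mul_left _
  refine Summable.of_nonneg_of_le (besselI_term_nonneg n r hr) (fun k => ?_) hb
  have h1 : (r / 2) ^ (2 * k + m) = (r / 2) ^ m * ((r / 2) ^ 2) ^ k := by
    rw [← pow_mul, ← pow_add]; ring_nf
  rw [h1]
  have h2 : (1 : ℝ) / ((Nat.factorial k : ℝ) * (Nat.factorial (k + m) : ℝ))
      ≤ 1 / (Nat.factorial k : ℝ) := by
    have hk1 : (1:ℝ) ≤ (Nat.factorial (k+m) : ℝ) := by exact_mod_cast Nat.factorial_pos (k+m)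
    have hk2 : (0:ℝ) < (Nat.factorial k : ℝ) := by exact_mod_cast Nat.factorial_pos k
    apply one_div_le_one_div_of_le hk2
    nlinarith
  calc (1 : ℝ) / ((Nat.factorial k : ℝ) * (Nat.factorial (k + m) : ℝ))
        * ((r / 2) ^ m * ((r / 2) ^ 2) ^ k)
      ≤ 1 / (Nat.factorial k : ℝ) * ((r / 2) ^ m * ((r / 2) ^ 2) ^ k) := by
        apply mul_le_mul_of_nonneg_right h2; positivity
    _ = (r / 2) ^ m * (((r / 2) ^ 2) ^ k / (Nat.factorial k : ℝ)) := by ring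

lemma besselI_nonneg (n : ℤ) (r : ℝ) (hr : 0 ≤ r) : 0 ≤ besselI n r :=
  tsum_nonneg (besselI_term_nonneg n r hr)

lemma besselI_pos (n : ℤ) (r : ℝ) (hr : 0 < r) : 0 < besselI n r := by
  have h0 : (0:ℝ) < (1 / ((Nat.factorial 0 : ℝ) * (Nat.factorial (0 + n.natAbs) : ℝ)))
      * (r / 2) ^ (2 * 0 + n.natAbs) := by positivity
  exact h0.trans_le (Summable.le_tsum (summable_besselI_term n r hr.le) 0
    (fun k _ => besselI_term_nonneg n r hr.le k))

/-- Bijection sending `(n,k)` to `(k, k+|n|)` for `n ≥ 0` and `(k+|n|, k)` for `n < 0`. -/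
def zkEquiv : ℤ × ℕ ≃ ℕ × ℕ where
  toFun p := if 0 ≤ p.1 then (p.2, p.2 + p.1.natAbs) else (p.2 + p.1.natAbs, p.2)
  invFun q := if q.1 ≤ q.2 then (((q.2 - q.1 : ℕ) : ℤ), q.1) else (-((q.1 - q.2 : ℕ) : ℤ), q.2)
  left_inv p := by
    obtain ⟨n, k⟩ := p
    by_cases h : 0 ≤ n
    · simp only [h, if_true, if_pos (Nat.le_add_right k n.natAbs), Prod.mk.injEq,
        Nat.add_sub_cancel_left]
      exact ⟨Int.natAbs_of_nonneg h, trivial⟩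
    · have h2 : ¬ (k + n.natAbs ≤ k) := by omega
      simp only [h, if_false, if_neg h2, Prod.mk.injEq, Nat.add_sub_cancel_left]
      refine ⟨?_, trivial⟩
      omega
  right_inv q := by
    obtain ⟨a, b⟩ := q
    by_cases h : a ≤ b
    · have h0 : (0:ℤ) ≤ ((b - a : ℕ) : ℤ) := by positivity
      simp only [h, if_true, if_pos h0, Prod.mk.injEq, Int.natAbs_natCast]
      exact ⟨trivial, by omega⟩
    · have h0 : ¬ ((0:ℤ) ≤ -((a - b : ℕ) : ℤ)) := by omega
      simp only [h, if_false, if_neg h0, Prod.mk.injEq, Int.natAbs_neg, Int.natAbs_natCast]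
      exact ⟨by omega, trivial⟩

lemma zkEquiv_def (p : ℤ × ℕ) : zkEquiv p =
    if 0 ≤ p.1 then (p.2, p.2 + p.1.natAbs) else (p.2 + p.1.natAbs, p.2) := rfl

lemma tsum_ofReal_pow_div_factorial (x : ℝ) (hx : 0 ≤ x) :
    ∑' a : ℕ, ENNReal.ofReal (x ^ a / (Nat.factorial a : ℝ)) = ENNReal.ofReal (Real.exp x) := by
  rw [show Real.exp x = ∑' a : ℕ, x ^ a / (Nat.factorial a : ℝ) by
    rw [Real.exp_eq_exp_ℝ, NormedSpace.exp_eq_tsum_div]]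
  exact (ENNReal.ofReal_tsum_of_nonneg (fun a => by positivity)
    (Real.summable_pow_div_factorial x)).symm

lemma tsum_ofReal_besselI (r : ℝ) (hr : 0 ≤ r) :
    ∑' n : ℤ, ENNReal.ofReal (besselI n r) = ENNReal.ofReal (Real.exp r) := by
  have hterm : ∀ n : ℤ, ENNReal.ofReal (besselI n r)
      = ∑' k : ℕ, ENNReal.ofReal ((1 / ((Nat.factorial k : ℝ)
          * (Nat.factorial (k + n.natAbs) : ℝ))) * (r / 2) ^ (2 * k + n.natAbs)) := fun n =>
    ENNReal.ofReal_tsum_of_nonneg (besselI_term_nonneg n r hr) (summable_besselI_term n r hr)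
  set g : ℕ × ℕ → ENNReal := fun q =>
    ENNReal.ofReal ((1 / ((Nat.factorial q.1 : ℝ) * (Nat.factorial q.2 : ℝ)))
      * (r / 2) ^ (q.1 + q.2)) with hg
  have key : ∑' n : ℤ, ENNReal.ofReal (besselI n r) = ∑' q : ℕ × ℕ, g q := by
    rw [tsum_congr hterm, ← ENNReal.tsum_prod, ← zkEquiv.tsum_eq g]
    apply tsum_congr
    rintro ⟨n, k⟩
    rw [zkEquiv_def]
    by_cases h : 0 ≤ n
    · simp only [h, if_true, hg]
      congr 1
      ring
    · simp only [h, if_false, hg]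
      congr 1
      ring
  rw [key, ENNReal.tsum_prod']
  have hsplit : ∀ a b : ℕ, g (a, b)
      = ENNReal.ofReal ((r/2) ^ a / (Nat.factorial a : ℝ))
      * ENNReal.ofReal ((r/2) ^ b / (Nat.factorial b : ℝ)) := by
    intro a b
    simp only [hg, ← ENNReal.ofReal_mul (by positivity : (0:ℝ) ≤ (r/2) ^ a / (Nat.factorial a : ℝ))]
    congr 1
    rw [pow_add]
    field_simp
  have hrow : ∀ a : ℕ, ∑' b : ℕ, g (a, b)
      = ENNReal.ofReal ((r/2) ^ a / (Nat.factorial a : ℝ)) * ENNReal.ofReal (Real.exp (r/2)) := by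
    intro a
    rw [tsum_congr (hsplit a), ENNReal.tsum_mul_left,
      tsum_ofReal_pow_div_factorial _ (by positivity)]
  rw [tsum_congr hrow, ENNReal.tsum_mul_right, tsum_ofReal_pow_div_factorial _ (by positivity),
    ← ENNReal.ofReal_mul (Real.exp_nonneg _), ← Real.exp_add]
  norm_num

lemma tsum_ofReal_expBessel (r : ℝ) (hr : 0 ≤ r) :
    ∑' n : ℤ, ENNReal.ofReal (Real.exp (-r) * besselI n r) = 1 := by
  have h : ∀ n : ℤ, ENNReal.ofReal (Real.exp (-r) * besselI n r)
      = ENNReal.ofReal (Real.exp (-r)) * ENNReal.ofReal (besselI n r) := fun n =>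
    ENNReal.ofReal_mul (Real.exp_nonneg _)
  rw [tsum_congr h, ENNReal.tsum_mul_left, tsum_ofReal_besselI r hr,
    ← ENNReal.ofReal_mul (Real.exp_nonneg _), ← Real.exp_add, neg_add_cancel, Real.exp_zero,
    ENNReal.ofReal_one]

lemma expBessel_le_one (r : ℝ) (hr : 0 ≤ r) (n : ℤ) : Real.exp (-r) * besselI n r ≤ 1 := by
  have h := ENNReal.le_tsum (f := fun n : ℤ => ENNReal.ofReal (Real.exp (-r) * besselI n r)) n
  rw [tsum_ofReal_expBessel r hr] at h
  rwa [ENNReal.ofReal_le_one] at h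

lemma tsum_pi_prod {d : ℕ} (f : Fin d → ℤ → ENNReal) :
    ∑' α : Fin d → ℤ, ∏ j, f j (α j) = ∏ j, ∑' n, f j n := by
  induction d with
  | zero => simp [tsum_fintype]
  | succ d ih =>
    rw [← (Fin.consEquiv (fun _ : Fin (d+1) => ℤ)).tsum_eq, Fin.prod_univ_succ]
    have step : ∀ p : ℤ × (Fin d → ℤ),
        ∏ j : Fin (d + 1), f j ((Fin.consEquiv (fun _ : Fin (d+1) => ℤ)) p j)
        = f 0 p.1 * ∏ j : Fin d, f j.succ (p.2 j) := by
      rintro ⟨a, g⟩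
      rw [Fin.prod_univ_succ]
      simp [Fin.consEquiv]
    rw [tsum_congr step, ENNReal.tsum_prod']
    have : ∀ a : ℤ, ∑' g : Fin d → ℤ, f 0 a * ∏ j : Fin d, f j.succ (g j)
        = f 0 a * ∏ j : Fin d, ∑' n, f j.succ n := by
      intro a
      rw [ENNReal.tsum_mul_left, ih]
    rw [tsum_congr this, ENNReal.tsum_mul_right]

lemma prodExpBessel (d : ℕ) (r : Fin d → ℝ) (hr : ∀ j, 0 ≤ r j) :
    Summable (fun α : Fin d → ℤ => ∏ j, Real.exp (-(r j)) * besselI (α j) (r j)) ∧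
    ∑' α : Fin d → ℤ, ∏ j, Real.exp (-(r j)) * besselI (α j) (r j) = 1 := by
  set F : (Fin d → ℤ) → ℝ := fun α => ∏ j, Real.exp (-(r j)) * besselI (α j) (r j) with hF
  have hFnn : ∀ α, 0 ≤ F α := fun α => Finset.prod_nonneg fun j _ =>
    mul_nonneg (Real.exp_nonneg _) (besselI_nonneg _ _ (hr j))
  have hE : ∑' α : Fin d → ℤ, ENNReal.ofReal (F α) = 1 := by
    have h1 : ∀ α : Fin d → ℤ, ENNReal.ofReal (F α)
        = ∏ j, ENNReal.ofReal (Real.exp (-(r j)) * besselI (α j) (r j)) := fun α =>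
      ENNReal.ofReal_prod_of_nonneg fun j _ =>
        mul_nonneg (Real.exp_nonneg _) (besselI_nonneg _ _ (hr j))
    rw [tsum_congr h1]
    refine Eq.trans (tsum_pi_prod fun j n => ENNReal.ofReal (Real.exp (-(r j)) * besselI n (r j))) ?_
    rw [Finset.prod_congr rfl fun j _ => tsum_ofReal_expBessel (r j) (hr j)]
    simp
  have hsumm : Summable F := by
    have h2 := ENNReal.summable_toReal (f := fun α : Fin d → ℤ => ENNReal.ofReal (F α))
      (by rw [hE]; exact ENNReal.one_ne_top)
    simpa [ENNReal.toReal_ofReal, hFnn] using h2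
  have htsum : ∑' α, F α = 1 := by
    have h2 := ENNReal.tsum_toReal_eq (f := fun α : Fin d → ℤ => ENNReal.ofReal (F α))
      (fun _ => ENNReal.ofReal_ne_top)
    rw [hE] at h2
    simp only [ENNReal.toReal_one] at h2
    calc ∑' α, F α = ∑' α : Fin d → ℤ, (ENNReal.ofReal (F α)).toReal :=
          tsum_congr fun α => (ENNReal.toReal_ofReal (hFnn α)).symm
      _ = 1 := h2.symm
  exact ⟨hsumm, htsum⟩

theorem stmt1 (d : ℕ) (hd : 1 ≤ d) (Δx : ℝ) (hΔx : 0 < Δx)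
    (c : Fin d → ℝ) (hc : ∀ j, 0 < c j) :
    -- (i) positivity
    (∀ (α : Fin d → ℤ) (t : ℝ), 0 < t → 0 < heatKernel d Δx c α t) ∧
    -- (ii) unit mass
    (∀ t : ℝ, 0 ≤ t → ∑' α : Fin d → ℤ, heatKernel d Δx c α t * Δx ^ d = 1) ∧
    -- (iii) ℓ^p contraction, 1 ≤ p < ∞
    (∀ p : ℝ, 1 ≤ p → ∀ t : ℝ, 0 < t →
      (∑' α : Fin d → ℤ, |heatKernel d Δx c α t| ^ p * Δx ^ d) ^ (1 / p)
        ≤ (∑' α : Fin d → ℤ, |heatKernel d Δx c α 0| ^ p * Δx ^ d) ^ (1 / p) ∧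
      (∑' α : Fin d → ℤ, |heatKernel d Δx c α 0| ^ p * Δx ^ d) ^ (1 / p)
        = Δx ^ ((d : ℝ) / p - d)) ∧
    -- (iii') ℓ^∞ contraction
    (∀ t : ℝ, 0 < t →
      (⨆ α : Fin d → ℤ, |heatKernel d Δx c α t|) ≤ ⨆ α : Fin d → ℤ, |heatKernel d Δx c α 0|) ∧
    (⨆ α : Fin d → ℤ, |heatKernel d Δx c α 0|) = (Δx ^ d)⁻¹ := by
  have hD : (0:ℝ) < Δx ^ d := pow_pos hΔx d
  set R : ℝ → Fin d → ℝ := fun t j => 2 * c j * t / Δx ^ 2 with hR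
  set P : ℝ → (Fin d → ℤ) → ℝ :=
    fun t α => ∏ j, Real.exp (-(R t j)) * besselI (α j) (R t j) with hP
  have hHK : ∀ (α : Fin d → ℤ) (t : ℝ), heatKernel d Δx c α t = (Δx ^ d)⁻¹ * P t α :=
    fun α t => rfl
  have hRnn : ∀ t : ℝ, 0 ≤ t → ∀ j, 0 ≤ R t j := fun t ht j => by
    have := (hc j).le
    rw [hR]
    positivity
  have hRpos : ∀ t : ℝ, 0 < t → ∀ j, 0 < R t j := fun t ht j => by
    have := hc j
    rw [hR]
    positivity
  have hPpos : ∀ t : ℝ, 0 < t → ∀ α, 0 < P t α := fun t ht α =>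
    Finset.prod_pos fun j _ => mul_pos (Real.exp_pos _) (besselI_pos _ _ (hRpos t ht j))
  have hPnn : ∀ t : ℝ, 0 ≤ t → ∀ α, 0 ≤ P t α := fun t ht α =>
    Finset.prod_nonneg fun j _ =>
      mul_nonneg (Real.exp_nonneg _) (besselI_nonneg _ _ (hRnn t ht j))
  have hPle : ∀ t : ℝ, 0 ≤ t → ∀ α, P t α ≤ 1 := fun t ht α =>
    Finset.prod_le_one
      (fun j _ => mul_nonneg (Real.exp_nonneg _) (besselI_nonneg _ _ (hRnn t ht j)))
      (fun j _ => expBessel_le_one _ (hRnn t ht j) _)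
  have hPsum : ∀ t : ℝ, 0 ≤ t → Summable (P t) ∧ ∑' α, P t α = 1 := fun t ht =>
    prodExpBessel d (R t) (hRnn t ht)
  -- heat kernel at time 0
  have hk0 : ∀ α : Fin d → ℤ, heatKernel d Δx c α 0
      = if α = 0 then (Δx ^ d)⁻¹ else 0 := by
    intro α
    rw [hHK]
    have hfac : ∀ j, Real.exp (-(R 0 j)) * besselI (α j) (R 0 j)
        = if α j = 0 then 1 else 0 := by
      intro j
      have : R 0 j = 0 := by rw [hR]; ring
      rw [this, neg_zero, Real.exp_zero, one_mul, besselI_zero]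
    rw [hP]
    simp only []
    rw [Finset.prod_congr rfl fun j _ => hfac j]
    by_cases h : α = 0
    · rw [if_pos h]
      have : ∀ j, (if α j = 0 then (1:ℝ) else 0) = 1 := fun j => by
        rw [if_pos (by rw [h]; rfl)]
      rw [Finset.prod_congr rfl fun j _ => this j, Finset.prod_const_one, mul_one]
    · rw [if_neg h]
      obtain ⟨j, hj⟩ : ∃ j, α j ≠ 0 := by
        by_contra hcon
        push_neg at hcon
        exact h (funext hcon)
      rw [Finset.prod_eq_zero (Finset.mem_univ j) (by rw [if_neg hj]), mul_zero]
  refine ⟨?_, ?_, ?_, ?_, ?_⟩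
  · -- (i)
    intro α t ht
    rw [hHK]
    exact mul_pos (inv_pos.2 hD) (hPpos t ht α)
  · -- (ii)
    intro t ht
    have h1 : ∀ α : Fin d → ℤ, heatKernel d Δx c α t * Δx ^ d = P t α := by
      intro α
      rw [hHK, mul_comm ((Δx ^ d)⁻¹) (P t α), mul_assoc, inv_mul_cancel₀ hD.ne', mul_one]
    rw [tsum_congr h1]
    exact (hPsum t ht).2
  · -- (iii)
    intro p hp t ht
    have hp0 : (0:ℝ) < p := lt_of_lt_of_le one_pos hp
    -- the t = 0 sum
    have hzero : ∑' α : Fin d → ℤ, |heatKernel d Δx c α 0| ^ p * Δx ^ d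
        = ((Δx ^ d)⁻¹) ^ p * Δx ^ d := by
      rw [tsum_eq_single (0 : Fin d → ℤ)]
      · rw [hk0, if_pos rfl, abs_of_pos (inv_pos.2 hD)]
      · intro α hα
        rw [hk0, if_neg hα, abs_zero, Real.zero_rpow hp0.ne', zero_mul]
    have heq : (((Δx ^ d)⁻¹) ^ p * Δx ^ d) ^ (1/p) = Δx ^ ((d : ℝ) / p - d) := by
      have h1 : ((Δx ^ d : ℝ))⁻¹ = Δx ^ (-(d:ℝ)) := by
        rw [← Real.rpow_natCast Δx d, ← Real.rpow_neg hΔx.le]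
      rw [h1, ← Real.rpow_natCast Δx d, ← Real.rpow_mul hΔx.le, ← Real.rpow_add hΔx,
        ← Real.rpow_mul hΔx.le]
      congr 1
      field_simp
      ring
    constructor
    · -- the inequality
      apply Real.rpow_le_rpow (tsum_nonneg fun α => by positivity)
      · rw [hzero]
        have hterm : ∀ α : Fin d → ℤ, |heatKernel d Δx c α t| ^ p * Δx ^ d
            ≤ ((Δx ^ d)⁻¹) ^ p * Δx ^ d * P t α := by
          intro α
          have hpos := hPpos t ht α
          rw [hHK, abs_of_pos (mul_pos (inv_pos.2 hD) hpos),
            Real.mul_rpow (inv_pos.2 hD).le hpos.le]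
          have h2 : P t α ^ p ≤ P t α := by
            calc P t α ^ p ≤ P t α ^ (1:ℝ) :=
              Real.rpow_le_rpow_of_exponent_ge hpos (hPle t ht.le α) hp
            _ = P t α := Real.rpow_one _
          calc ((Δx ^ d)⁻¹) ^ p * P t α ^ p * Δx ^ d
              ≤ ((Δx ^ d)⁻¹) ^ p * P t α * Δx ^ d := by
                apply mul_le_mul_of_nonneg_right _ hD.le
                exact mul_le_mul_of_nonneg_left h2 (by positivity)
            _ = ((Δx ^ d)⁻¹) ^ p * Δx ^ d * P t α := by ring
        have hbsum : Summable fun α : Fin d → ℤ => ((Δx ^ d)⁻¹) ^ p * Δx ^ d * P t α :=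
          (hPsum t ht.le).1.mul_left _
        calc ∑' α : Fin d → ℤ, |heatKernel d Δx c α t| ^ p * Δx ^ d
            ≤ ∑' α : Fin d → ℤ, ((Δx ^ d)⁻¹) ^ p * Δx ^ d * P t α := by
              apply Summable.tsum_le_tsum hterm _ hbsum
              exact Summable.of_nonneg_of_le (fun α => by positivity) hterm hbsum
          _ = ((Δx ^ d)⁻¹) ^ p * Δx ^ d := by
              rw [tsum_mul_left, (hPsum t ht.le).2, mul_one]
      · exact le_of_lt (by positivity)
    · rw [hzero, heq]
  · -- (iii') inequality
    intro t ht
    have hsup0 : (⨆ α : Fin d → ℤ, |heatKernel d Δx c α 0|) = (Δx ^ d)⁻¹ := by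
      apply le_antisymm
      · apply ciSup_le
        intro α
        show |heatKernel d Δx c α 0| ≤ (Δx ^ d)⁻¹
        rw [hk0]
        split_ifs
        · rw [abs_of_pos (inv_pos.2 hD)]
        · rw [abs_zero]; positivity
      · have hbdd : BddAbove (Set.range fun α : Fin d → ℤ => |heatKernel d Δx c α 0|) := by
          refine ⟨(Δx ^ d)⁻¹, ?_⟩
          rintro x ⟨α, rfl⟩
          show |heatKernel d Δx c α 0| ≤ (Δx ^ d)⁻¹
          rw [hk0]
          split_ifs
          · rw [abs_of_pos (inv_pos.2 hD)]
          · rw [abs_zero]; positivity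
        have h0 := le_ciSup hbdd (0 : Fin d → ℤ)
        rwa [hk0, if_pos rfl, abs_of_pos (inv_pos.2 hD)] at h0
    rw [hsup0]
    apply ciSup_le
    intro α
    show |heatKernel d Δx c α t| ≤ (Δx ^ d)⁻¹
    rw [hHK, abs_of_nonneg (mul_nonneg (inv_pos.2 hD).le (hPnn t ht.le α))]
    calc (Δx ^ d)⁻¹ * P t α ≤ (Δx ^ d)⁻¹ * 1 :=
        mul_le_mul_of_nonneg_left (hPle t ht.le α) (inv_pos.2 hD).le
      _ = (Δx ^ d)⁻¹ := mul_one _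
  · -- (iii') equality at 0
    apply le_antisymm
    · apply ciSup_le
      intro α
      show |heatKernel d Δx c α 0| ≤ (Δx ^ d)⁻¹
      rw [hk0]
      split_ifs
      · rw [abs_of_pos (inv_pos.2 hD)]
      · rw [abs_zero]; positivity
    · have hbdd : BddAbove (Set.range fun α : Fin d → ℤ => |heatKernel d Δx c α 0|) := by
        refine ⟨(Δx ^ d)⁻¹, ?_⟩
        rintro x ⟨α, rfl⟩
        show |heatKernel d Δx c α 0| ≤ (Δx ^ d)⁻¹
        rw [hk0]
        split_ifs
        · rw [abs_of_pos (inv_pos.2 hD)]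
        · rw [abs_zero]; positivity
      have h0 := le_ciSup hbdd (0 : Fin d → ℤ)
      rwa [hk0, if_pos rfl, abs_of_pos (inv_pos.2 hD)] at h0
end

section
/- Let d ≥ 1, Δx > 0, c¹,…,c^d > 0, and let a_α(t) := Δx^{−d} ∏_{j=1}^d e^{−r^j} I_{α^j}(r^j) with r^j := 2c^j t/Δx². Set C₀ := 252. For every t > 0, every α ∈ ℤ^d, and every b = (b¹,…,b^d) with b^j ∈ [−1/2, 1/2], one has |a_α(t)| ≤ π^{d/2} ∏_{j=1}^d (4 c^j t)^{−1/2} exp((C₀ c^j t/(2Δx²)) (b^j)² − α^j b^j). -/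
open scoped BigOperators
open MeasureTheory intervalIntegral
open scoped ENNReal NNReal
set_option maxHeartbeats 1000000

noncomputable def bS (x y : ℝ) (n : ℕ) : ℝ :=
  ∑' k : ℕ, x ^ (k + n) * y ^ k / ((Nat.factorial k : ℝ) * (Nat.factorial (k + n) : ℝ))

lemma bS_summable (x y : ℝ) (n : ℕ) :
    Summable (fun k : ℕ => x ^ (k + n) * y ^ k / ((Nat.factorial k : ℝ) * (Nat.factorial (k + n) : ℝ))) := by
  apply Summable.of_norm
  have h := (Real.summable_pow_div_factorial (|x| * |y|)).mul_left (|x| ^ n / (Nat.factorial n : ℝ))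
  apply h.of_nonneg_of_le (fun k => norm_nonneg _)
  intro k
  have hk : (0:ℝ) < Nat.factorial k := by positivity
  have hn : (0:ℝ) < Nat.factorial n := by positivity
  have hkn : (0:ℝ) < Nat.factorial (k + n) := by positivity
  have h1 : ‖x ^ (k + n) * y ^ k / ((Nat.factorial k : ℝ) * (Nat.factorial (k + n) : ℝ))‖
      = |x| ^ (k + n) * |y| ^ k / ((Nat.factorial k : ℝ) * (Nat.factorial (k + n) : ℝ)) := by
    rw [Real.norm_eq_abs, abs_div, abs_mul, abs_pow, abs_pow]
    congr 1
    rw [abs_mul, abs_of_pos hk, abs_of_pos hkn]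
  rw [h1]
  have h2 : |x| ^ n / (Nat.factorial n : ℝ) * ((|x| * |y|) ^ k / (Nat.factorial k : ℝ))
      = |x| ^ (k + n) * |y| ^ k / ((Nat.factorial k : ℝ) * (Nat.factorial n : ℝ)) := by
    rw [mul_pow, pow_add]; ring
  rw [h2]
  apply div_le_div_of_nonneg_left (by positivity) (by positivity)
  have : (Nat.factorial n : ℝ) ≤ (Nat.factorial (k + n) : ℝ) := by
    exact_mod_cast Nat.factorial_le (Nat.le_add_left n k)
  nlinarith

open Complex in
lemma expand_integrand (x y θ : ℝ) (n : ℕ) :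
    Complex.exp ((x:ℂ) * Complex.exp (θ * I) + (y:ℂ) * Complex.exp (-(θ * I)))
        * Complex.exp (-((n:ℂ) * θ * I))
    = ∑' p : ℕ × ℕ, ((x:ℂ) ^ p.1 / p.1.factorial) * ((y:ℂ) ^ p.2 / p.2.factorial)
        * Complex.exp ((((p.1 : ℤ) - p.2 - n : ℤ) : ℂ) * θ * I) := by
  have hx : Summable fun i : ℕ => ‖((x:ℂ) * Complex.exp (θ * I)) ^ i / i.factorial‖ := by
    simpa [norm_div, norm_pow] using
      Real.summable_pow_div_factorial ‖(x:ℂ) * Complex.exp (θ * I)‖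
  have hy : Summable fun j : ℕ => ‖((y:ℂ) * Complex.exp (-(θ * I))) ^ j / j.factorial‖ := by
    simpa [norm_div, norm_pow] using
      Real.summable_pow_div_factorial ‖(y:ℂ) * Complex.exp (-(θ * I))‖
  have e1 : Complex.exp ((x:ℂ) * Complex.exp (θ * I))
      = ∑' i : ℕ, ((x:ℂ) * Complex.exp (θ * I)) ^ i / i.factorial := by
    rw [Complex.exp_eq_exp_ℂ, NormedSpace.exp_eq_tsum_div]
  have e2 : Complex.exp ((y:ℂ) * Complex.exp (-(θ * I)))
      = ∑' j : ℕ, ((y:ℂ) * Complex.exp (-(θ * I))) ^ j / j.factorial := by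
    rw [Complex.exp_eq_exp_ℂ, NormedSpace.exp_eq_tsum_div]
  rw [Complex.exp_add, e1, e2, tsum_mul_tsum_of_summable_norm hx hy, ← tsum_mul_right]
  apply tsum_congr
  rintro ⟨i, j⟩
  simp only [mul_pow]
  rw [← Complex.exp_nat_mul, ← Complex.exp_nat_mul]
  have he : Complex.exp ((i:ℂ) * ((θ:ℂ) * I)) * Complex.exp ((j:ℂ) * -((θ:ℂ) * I))
      * Complex.exp (-((n:ℂ) * (θ:ℂ) * I))
      = Complex.exp ((((i : ℤ) - j - n : ℤ) : ℂ) * (θ:ℂ) * I) := by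
    rw [← Complex.exp_add, ← Complex.exp_add]
    congr 1
    push_cast
    ring
  linear_combination ((x:ℂ) ^ i * (y:ℂ) ^ j / ((i.factorial : ℂ) * (j.factorial : ℂ))) * he

open Complex in
lemma integral_exp_int_mul_theta (m : ℤ) :
    (∫ θ in (-Real.pi)..Real.pi, Complex.exp ((m:ℂ) * θ * I))
      = if m = 0 then (2 * Real.pi : ℂ) else 0 := by
  rcases eq_or_ne m 0 with hm | hm
  · subst hm
    simp only [Int.cast_zero, zero_mul, Complex.exp_zero, if_true]
    rw [intervalIntegral.integral_const, real_smul]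
    push_cast
    ring
  · rw [if_neg hm]
    have hrw : ∀ θ : ℝ, (m:ℂ) * θ * I = ((m:ℂ) * I) * θ := fun θ => by ring
    simp_rw [hrw]
    rw [integral_exp_mul_complex (by simp [hm, Complex.ext_iff] : (m:ℂ) * I ≠ 0)]
    have hmm : ((-1 : ℂ) ^ m)⁻¹ = (-1 : ℂ) ^ m := by
      rw [inv_eq_of_mul_eq_one_right]
      rw [← zpow_add₀ (by norm_num : (-1:ℂ) ≠ 0)]
      rw [show m + m = 2 * m from by ring, zpow_mul]
      norm_num
    have h1 : Complex.exp ((m:ℂ) * I * (Real.pi : ℂ)) = (-1 : ℂ) ^ m := by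
      rw [show (m:ℂ) * I * (Real.pi : ℂ) = (m:ℂ) * ((Real.pi:ℂ) * I) from by ring,
        Complex.exp_int_mul, Complex.exp_pi_mul_I]
    have h2 : Complex.exp ((m:ℂ) * I * ((-Real.pi : ℝ) : ℂ)) = (-1 : ℂ) ^ m := by
      rw [show (m:ℂ) * I * ((-Real.pi : ℝ) : ℂ) = ((-m : ℤ) : ℂ) * ((Real.pi:ℂ) * I) from by
        push_cast; ring, Complex.exp_int_mul, Complex.exp_pi_mul_I, zpow_neg, hmm]
    rw [h1, h2, sub_self, zero_div]

open Complex in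
lemma bS_integral_rep (x y : ℝ) (n : ℕ) :
    (∫ θ in (-Real.pi)..Real.pi,
      Complex.exp ((x:ℂ) * Complex.exp (θ * I) + (y:ℂ) * Complex.exp (-(θ * I)))
        * Complex.exp (-((n:ℂ) * θ * I)))
    = ((2 * Real.pi * bS x y n : ℝ) : ℂ) := by
  have hpi : (-Real.pi) ≤ Real.pi := by linarith [Real.pi_pos]
  have h2pi : (0:ℝ) ≤ 2 * Real.pi := by linarith [Real.pi_pos]
  set F : ℕ × ℕ → ℝ → ℂ := fun p θ =>
    ((x:ℂ) ^ p.1 / p.1.factorial) * ((y:ℂ) ^ p.2 / p.2.factorial)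
      * Complex.exp ((((p.1 : ℤ) - p.2 - n : ℤ) : ℂ) * θ * I) with hF
  set cp : ℕ × ℕ → ℝ := fun p => |x| ^ p.1 / p.1.factorial * (|y| ^ p.2 / p.2.factorial) with hcp
  have hcp0 : ∀ p, 0 ≤ cp p := fun p => by positivity
  have hcpsum : Summable cp := by
    have hf : Summable fun i : ℕ => ‖|x| ^ i / (i.factorial : ℝ)‖ := by
      refine (Real.summable_pow_div_factorial |x|).congr fun i => ?_
      rw [Real.norm_eq_abs]
      exact (_root_.abs_of_nonneg (by positivity)).symm
    have hg : Summable fun j : ℕ => ‖|y| ^ j / (j.factorial : ℝ)‖ := by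
      refine (Real.summable_pow_div_factorial |y|).congr fun j => ?_
      rw [Real.norm_eq_abs]
      exact (_root_.abs_of_nonneg (by positivity)).symm
    have := summable_mul_of_summable_norm (R := ℝ) (ι := ℕ) (ι' := ℕ) hf hg
    rw [hcp]
    exact this
  have hnorm : ∀ p θ, ‖F p θ‖ = cp p := by
    intro p θ
    rw [hF]
    simp only [norm_mul, norm_div, norm_pow, Complex.norm_exp]
    have hre : ((((p.1 : ℤ) - p.2 - n : ℤ) : ℂ) * θ * I).re = 0 := by
      simp [Complex.mul_re, Complex.mul_im]
    rw [hre, Real.exp_zero, hcp]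
    simp [Complex.norm_natCast, Complex.norm_real]
  have hmeas : ∀ p : ℕ × ℕ, AEStronglyMeasurable (F p)
      (volume.restrict (Set.Ioc (-Real.pi) Real.pi)) := by
    intro p
    apply Continuous.aestronglyMeasurable
    rw [hF]
    fun_prop
  have hfin : ∑' p : ℕ × ℕ, ∫⁻ θ in Set.Ioc (-Real.pi) Real.pi, ‖F p θ‖₊ ∂volume ≠ ⊤ := by
    have key : ∀ p : ℕ × ℕ, ∫⁻ θ in Set.Ioc (-Real.pi) Real.pi, ‖F p θ‖₊ ∂volume
        = ENNReal.ofReal (cp p * (2 * Real.pi)) := by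
      intro p
      have h1 : ∀ θ : ℝ, (‖F p θ‖₊ : ℝ≥0∞) = ENNReal.ofReal (cp p) := by
        intro θ
        rw [← enorm_eq_nnnorm, ← ofReal_norm, hnorm]
      rw [lintegral_congr h1, setLIntegral_const, Real.volume_Ioc,
        ← ENNReal.ofReal_mul (hcp0 p)]
      congr 1
      ring
    rw [tsum_congr key, ← ENNReal.ofReal_tsum_of_nonneg
      (fun p => mul_nonneg (hcp0 p) h2pi) (hcpsum.mul_right _)]
    exact ENNReal.ofReal_ne_top
  have expand : ∀ θ : ℝ,
      Complex.exp ((x:ℂ) * Complex.exp (θ * I) + (y:ℂ) * Complex.exp (-(θ * I)))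
        * Complex.exp (-((n:ℂ) * θ * I)) = ∑' p : ℕ × ℕ, F p θ :=
    fun θ => expand_integrand x y θ n
  rw [intervalIntegral.integral_of_le hpi]
  rw [setIntegral_congr_fun measurableSet_Ioc (fun θ _ => expand θ)]
  rw [integral_tsum hmeas hfin]
  have heval : ∀ p : ℕ × ℕ, (∫ θ in Set.Ioc (-Real.pi) Real.pi, F p θ ∂volume)
      = if ((p.1 : ℤ) - p.2 - n = 0) then
          ((x:ℂ) ^ p.1 / p.1.factorial) * ((y:ℂ) ^ p.2 / p.2.factorial) * (2 * Real.pi) else 0 := by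
    intro p
    rw [← intervalIntegral.integral_of_le hpi]
    rw [hF]
    simp only
    rw [intervalIntegral.integral_const_mul, integral_exp_int_mul_theta]
    split_ifs with h
    · rfl
    · rw [mul_zero]
  rw [tsum_congr heval]
  have hinj : Function.Injective (fun k : ℕ => ((k + n, k) : ℕ × ℕ)) := by
    intro a b h
    simpa using congrArg Prod.snd h
  rw [← Function.Injective.tsum_eq hinj]
  · have : ∀ k : ℕ, (if (((k + n : ℕ) : ℤ) - k - n = 0) then
        ((x:ℂ) ^ (k + n) / (k + n).factorial) * ((y:ℂ) ^ k / k.factorial) * (2 * Real.pi) else 0)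
        = ((2 * Real.pi : ℝ) : ℂ) *
          ((x ^ (k + n) * y ^ k / ((k.factorial : ℝ) * ((k + n).factorial : ℝ)) : ℝ) : ℂ) := by
      intro k
      rw [if_pos (by push_cast; ring)]
      push_cast
      have hk : ((k.factorial : ℝ) : ℂ) ≠ 0 := by exact_mod_cast Nat.cast_ne_zero.2 k.factorial_ne_zero
      have hkn : (((k + n).factorial : ℝ) : ℂ) ≠ 0 := by
        exact_mod_cast Nat.cast_ne_zero.2 (k + n).factorial_ne_zero
      field_simp
    rw [tsum_congr this, tsum_mul_left, bS, ← Complex.ofReal_tsum]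
    push_cast
    ring
  · intro p hp
    simp only [Function.mem_support, ne_eq] at hp
    rw [Set.mem_range]
    by_cases h : ((p.1 : ℤ) - p.2 - n = 0)
    · exact ⟨p.2, by ext <;> simp [show p.1 = p.2 + n from by omega]⟩
    · exact absurd (by simp [h]) hp

lemma bS_nonneg {x y : ℝ} (hx : 0 ≤ x) (hy : 0 ≤ y) (n : ℕ) : 0 ≤ bS x y n :=
  tsum_nonneg fun k => by positivity

open Complex in
lemma cos_rep (u : ℝ) :
    (∫ θ in (-Real.pi)..Real.pi, Real.exp (u * Real.cos θ)) = 2 * Real.pi * bS (u/2) (u/2) 0 := by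
  have h := bS_integral_rep (u/2) (u/2) 0
  have hpt : ∀ θ : ℝ,
      Complex.exp (((u/2 : ℝ):ℂ) * Complex.exp (θ * I) + ((u/2:ℝ):ℂ) * Complex.exp (-(θ * I)))
        * Complex.exp (-(((0:ℕ):ℂ) * θ * I)) = ((Real.exp (u * Real.cos θ) : ℝ) : ℂ) := by
    intro θ
    have harg : (((u/2 : ℝ):ℂ)) * Complex.exp ((θ:ℂ) * I) + ((u/2:ℝ):ℂ) * Complex.exp (-((θ:ℂ) * I))
        = ((u * Real.cos θ : ℝ) : ℂ) := by
      rw [show -((θ:ℂ) * I) = ((-θ : ℝ):ℂ) * I from by push_cast; ring]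
      rw [Complex.exp_mul_I, Complex.exp_mul_I, Complex.ofReal_neg, Complex.cos_neg,
        Complex.sin_neg, Complex.ofReal_mul, Complex.ofReal_cos]
      push_cast
      ring
    rw [harg, Nat.cast_zero, zero_mul, zero_mul, neg_zero, Complex.exp_zero, mul_one,
      Complex.ofReal_exp]
  have hcast : ((∫ θ in (-Real.pi)..Real.pi, Real.exp (u * Real.cos θ) : ℝ) : ℂ)
      = ((2 * Real.pi * bS (u/2) (u/2) 0 : ℝ) : ℂ) := by
    rw [← intervalIntegral.integral_ofReal, ← h]
    exact intervalIntegral.integral_congr fun θ _ => (hpt θ).symm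
  exact_mod_cast hcast

lemma exp_mul_bS (r s : ℝ) (n : ℕ) :
    Real.exp (n * s) * bS (r/2) (r/2) n = bS (r/2 * Real.exp s) (r/2 * Real.exp (-s)) n := by
  rw [bS, bS, ← tsum_mul_left]
  apply tsum_congr
  intro k
  have hexp : Real.exp s ^ (k + n) * Real.exp (-s) ^ k = Real.exp (n * s) := by
    rw [← Real.exp_nat_mul, ← Real.exp_nat_mul, ← Real.exp_add]
    congr 1
    push_cast
    ring
  rw [mul_pow, mul_pow]
  calc Real.exp (n * s) * ((r/2) ^ (k+n) * (r/2) ^ k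
        / ((Nat.factorial k : ℝ) * (Nat.factorial (k + n) : ℝ)))
      = (Real.exp s ^ (k + n) * Real.exp (-s) ^ k) * ((r/2) ^ (k+n) * (r/2) ^ k
        / ((Nat.factorial k : ℝ) * (Nat.factorial (k + n) : ℝ))) := by rw [hexp]
    _ = (r / 2) ^ (k + n) * Real.exp s ^ (k + n) * ((r / 2) ^ k * Real.exp (-s) ^ k)
        / ((Nat.factorial k : ℝ) * (Nat.factorial (k + n) : ℝ)) := by ring

open Complex in
lemma bS_le_bS_cosh (r s : ℝ) (hr : 0 ≤ r) (n : ℕ) :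
    bS (r/2 * Real.exp s) (r/2 * Real.exp (-s)) n
      ≤ bS (r * Real.cosh s / 2) (r * Real.cosh s / 2) 0 := by
  set x := r/2 * Real.exp s with hxd
  set y := r/2 * Real.exp (-s) with hyd
  have hx : 0 ≤ x := by positivity
  have hy : 0 ≤ y := by positivity
  have hxy : x + y = r * Real.cosh s := by rw [hxd, hyd, Real.cosh_eq]; ring
  have hpi : (-Real.pi) ≤ Real.pi := by linarith [Real.pi_pos]
  have h2pi : (0:ℝ) < 2 * Real.pi := by linarith [Real.pi_pos]
  have hnn : 0 ≤ 2 * Real.pi * bS x y n := mul_nonneg h2pi.le (bS_nonneg hx hy n)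
  have key : 2 * Real.pi * bS x y n ≤ 2 * Real.pi * bS ((x+y)/2) ((x+y)/2) 0 := by
    have h1 : 2 * Real.pi * bS x y n = ‖((2 * Real.pi * bS x y n : ℝ) : ℂ)‖ := by
      rw [Complex.norm_real, Real.norm_eq_abs, _root_.abs_of_nonneg hnn]
    rw [h1, ← bS_integral_rep]
    have h2 := intervalIntegral.norm_integral_le_integral_norm
      (f := fun θ : ℝ => Complex.exp ((x:ℂ) * Complex.exp (θ * I) + (y:ℂ) * Complex.exp (-(θ * I)))
        * Complex.exp (-((n:ℂ) * θ * I))) (μ := MeasureTheory.volume) hpi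
    refine h2.trans ?_
    have h3 : ∀ θ : ℝ,
        ‖Complex.exp ((x:ℂ) * Complex.exp (θ * I) + (y:ℂ) * Complex.exp (-(θ * I)))
          * Complex.exp (-((n:ℂ) * θ * I))‖ = Real.exp ((x + y) * Real.cos θ) := by
      intro θ
      have harg : (x:ℂ) * Complex.exp ((θ:ℂ) * I) + (y:ℂ) * Complex.exp (-((θ:ℂ) * I))
          = (((x + y) * Real.cos θ : ℝ) : ℂ) + (((x - y) * Real.sin θ : ℝ) : ℂ) * I := by
        rw [show -((θ:ℂ) * I) = ((-θ : ℝ):ℂ) * I from by push_cast; ring]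
        rw [Complex.exp_mul_I, Complex.exp_mul_I, Complex.ofReal_neg, Complex.cos_neg,
          Complex.sin_neg, ← Complex.ofReal_cos, ← Complex.ofReal_sin]
        push_cast
        ring
      rw [norm_mul, Complex.norm_exp, Complex.norm_exp,
        harg]
      have hre1 : ((((x + y) * Real.cos θ : ℝ) : ℂ) + (((x - y) * Real.sin θ : ℝ) : ℂ) * I).re
          = (x + y) * Real.cos θ := by
        simp [Complex.add_re, Complex.ofReal_re, Complex.mul_re, Complex.ofReal_im, Complex.cos_ofReal_re,
          Complex.I_re, Complex.I_im]
      have hre2 : (-((n:ℂ) * (θ:ℂ) * I)).re = 0 := by simp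
      rw [hre1, hre2, Real.exp_zero, mul_one]
    rw [intervalIntegral.integral_congr (fun θ _ => h3 θ), cos_rep]
  rw [hxy] at key
  exact le_of_mul_le_mul_left key h2pi

lemma one_sub_cos_ge (θ : ℝ) (h1 : -Real.pi ≤ θ) (h2 : θ ≤ Real.pi) :
    2 * θ^2 / Real.pi^2 ≤ 1 - Real.cos θ := by
  have hπ := Real.pi_pos
  have hcos : Real.cos θ = 1 - 2 * Real.sin (θ/2)^2 := by
    have h := Real.cos_two_mul (θ/2)
    have hs := Real.sin_sq_add_cos_sq (θ/2)
    rw [show 2 * (θ/2) = θ from by ring] at h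
    nlinarith
  have hj : |θ| / Real.pi ≤ Real.sin (|θ|/2) := by
    have := Real.mul_le_sin (x := |θ|/2) (by positivity) (by
      rw [div_le_div_iff₀ (by norm_num) (by norm_num)] at *
      rcases abs_cases θ with ⟨he, _⟩ | ⟨he, _⟩ <;> nlinarith [abs_nonneg θ])
    calc |θ| / Real.pi = 2 / Real.pi * (|θ|/2) := by field_simp
      _ ≤ Real.sin (|θ|/2) := this
  have hsq : Real.sin (|θ|/2)^2 = Real.sin (θ/2)^2 := by
    rcases abs_cases θ with ⟨he, _⟩ | ⟨he, _⟩
    · rw [he]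
    · rw [he, show -θ/2 = -(θ/2) from by ring, Real.sin_neg]
      ring
  have habs : (|θ| / Real.pi)^2 = θ^2 / Real.pi^2 := by
    rw [div_pow, sq_abs]
  have h3 : θ^2 / Real.pi^2 ≤ Real.sin (θ/2)^2 := by
    rw [← habs, ← hsq]
    apply pow_le_pow_left₀ (by positivity) hj
  rw [hcos]
  calc 2 * θ^2 / Real.pi^2 = 2 * (θ^2 / Real.pi^2) := by ring
    _ ≤ 2 * Real.sin (θ/2)^2 := by linarith
    _ = 1 - (1 - 2 * Real.sin (θ/2)^2) := by ring

lemma gauss_bound (u : ℝ) (hu : 0 < u) :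
    (∫ θ in (-Real.pi)..Real.pi, Real.exp (u * Real.cos θ))
      ≤ Real.exp u * (Real.pi * Real.sqrt (Real.pi / (2*u))) := by
  have hπ := Real.pi_pos
  have hpi : (-Real.pi) ≤ Real.pi := by linarith
  have hb : (0:ℝ) < 2 * u / Real.pi^2 := by positivity
  have step1 : (∫ θ in (-Real.pi)..Real.pi, Real.exp (u * Real.cos θ))
      ≤ ∫ θ in (-Real.pi)..Real.pi, Real.exp u * Real.exp (-(2 * u / Real.pi^2) * θ^2) := by
    apply intervalIntegral.integral_mono_on hpi
    · exact (Real.continuous_exp.comp (continuous_const.mul Real.continuous_cos)).intervalIntegrable _ _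
    · apply Continuous.intervalIntegrable
      fun_prop
    · intro θ hθ
      rw [Set.mem_Icc] at hθ
      rw [← Real.exp_add]
      apply Real.exp_le_exp.2
      have := one_sub_cos_ge θ hθ.1 hθ.2
      have hcos : Real.cos θ ≤ 1 - 2 * θ^2 / Real.pi^2 := by linarith
      calc u * Real.cos θ ≤ u * (1 - 2 * θ^2 / Real.pi^2) :=
            mul_le_mul_of_nonneg_left hcos hu.le
        _ = u + -(2 * u / Real.pi^2) * θ^2 := by field_simp; ring
  have step2 : (∫ θ in (-Real.pi)..Real.pi, Real.exp u * Real.exp (-(2 * u / Real.pi^2) * θ^2))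
      ≤ Real.exp u * Real.sqrt (Real.pi / (2 * u / Real.pi^2)) := by
    rw [intervalIntegral.integral_const_mul]
    apply mul_le_mul_of_nonneg_left _ (Real.exp_pos u).le
    have hint : MeasureTheory.Integrable
        (fun θ : ℝ => Real.exp (-(2 * u / Real.pi^2) * θ^2)) := integrable_exp_neg_mul_sq hb
    calc (∫ θ in (-Real.pi)..Real.pi, Real.exp (-(2 * u / Real.pi^2) * θ^2))
        = ∫ θ in Set.Ioc (-Real.pi) Real.pi, Real.exp (-(2 * u / Real.pi^2) * θ^2) :=
          intervalIntegral.integral_of_le hpi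
      _ ≤ ∫ θ : ℝ, Real.exp (-(2 * u / Real.pi^2) * θ^2) :=
          MeasureTheory.setIntegral_le_integral hint
            (Filter.Eventually.of_forall fun θ => (Real.exp_pos _).le)
      _ = Real.sqrt (Real.pi / (2 * u / Real.pi^2)) := integral_gaussian _
  have hsqrt : Real.sqrt (Real.pi / (2 * u / Real.pi^2))
      = Real.pi * Real.sqrt (Real.pi / (2*u)) := by
    rw [show Real.pi / (2 * u / Real.pi^2) = Real.pi^2 * (Real.pi / (2*u)) from by
      field_simp]
    rw [Real.sqrt_mul (by positivity), Real.sqrt_sq hπ.le]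
  calc (∫ θ in (-Real.pi)..Real.pi, Real.exp (u * Real.cos θ))
      ≤ Real.exp u * Real.sqrt (Real.pi / (2 * u / Real.pi^2)) := step1.trans step2
    _ = Real.exp u * (Real.pi * Real.sqrt (Real.pi / (2*u))) := by rw [hsqrt]

lemma bS_gauss (u : ℝ) (hu : 0 < u) :
    bS (u/2) (u/2) 0 ≤ Real.exp u * Real.sqrt (Real.pi / (2*u)) / 2 := by
  have hπ := Real.pi_pos
  have h := (cos_rep u).symm.le.trans (gauss_bound u hu)
  nlinarith [Real.sqrt_nonneg (Real.pi / (2*u)), Real.exp_pos u,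
    bS_nonneg (by positivity : (0:ℝ) ≤ u/2) (by positivity : (0:ℝ) ≤ u/2) 0]

lemma cosh_sub_one_le (s : ℝ) (h0 : 0 ≤ s) (h : s ≤ 1/2) : Real.cosh s - 1 ≤ s^2 := by
  set E := Real.exp s with hE
  have hEpos : 0 < E := Real.exp_pos s
  have hEinv : E * (Real.exp (-s)) = 1 := by rw [hE, ← Real.exp_add]; simp
  have hA2 : E ≤ 2 := by
    have hlog : Real.exp s ≤ Real.exp (Real.log 2) := by
      apply Real.exp_le_exp.2
      have := Real.log_two_gt_d9
      linarith
    rwa [Real.exp_log (by norm_num : (0:ℝ) < 2)] at hlog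
  have h0A : 1 + s ≤ E := by
    have := Real.add_one_le_exp s
    linarith
  have hA1 : E - 1 ≤ s * E := by
    have h1 : (-s) + 1 ≤ Real.exp (-s) := Real.add_one_le_exp (-s)
    nlinarith [Real.exp_pos (-s)]
  have hsq : (E - 1) * (E - 1) ≤ (s * E) * (s * E) :=
    mul_self_le_mul_self (by linarith) hA1
  rw [Real.cosh_eq, ← hE]
  have hinv : Real.exp (-s) = 1/E := by
    field_simp at hEinv ⊢
    linarith [hEinv]
  rw [hinv]
  have key : E^2 + 1 - 2*E - 2*s^2*E ≤ 0 := by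
    nlinarith [hsq, hA2, hEpos, mul_nonneg (mul_nonneg h0 h0) hEpos.le]
  have hrepr : (E + 1/E)/2 - 1 - s^2 = (E^2 + 1 - 2*E - 2*s^2*E)/(2*E) := by
    field_simp
  have hfin : (E + 1/E)/2 - 1 - s^2 ≤ 0 := by
    rw [hrepr]
    exact div_nonpos_of_nonpos_of_nonneg key (by positivity)
  linarith

lemma besselI_eq_bS (α : ℤ) (r : ℝ) : besselI α r = bS (r/2) (r/2) α.natAbs := by
  rw [besselI, bS]
  apply tsum_congr
  intro k
  rw [show 2 * k + α.natAbs = (k + α.natAbs) + k from by ring, pow_add]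
  ring

lemma coord_core (r b : ℝ) (hr : 0 < r) (hb1 : -(1/2) ≤ b) (hb2 : b ≤ 1/2) (α : ℤ) :
    Real.exp (-r) * besselI α r * Real.exp ((α : ℝ) * b)
      ≤ Real.sqrt (Real.pi / (2*r)) * Real.exp (63 * r * b^2) := by
  set m := α.natAbs with hm
  set s := |b| with hs
  have hs0 : 0 ≤ s := abs_nonneg b
  have hs2 : s ≤ 1/2 := abs_le.2 ⟨by linarith, hb2⟩
  have hsb : s^2 = b^2 := sq_abs b
  have hch1 : 1 ≤ Real.cosh s := Real.one_le_cosh s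
  have hu : 0 < r * Real.cosh s := mul_pos hr (Real.cosh_pos s)
  have hab : (α : ℝ) * b ≤ (m : ℝ) * s := by
    calc (α : ℝ) * b ≤ |(α : ℝ) * b| := le_abs_self _
      _ = |(α : ℝ)| * |b| := abs_mul _ _
      _ = (m : ℝ) * s := by rw [hm, hs, Nat.cast_natAbs, Int.cast_abs]
  have hI : besselI α r = bS (r/2) (r/2) m := besselI_eq_bS α r
  have hInn : 0 ≤ bS (r/2) (r/2) m := bS_nonneg (by positivity) (by positivity) m
  have step1 : Real.exp (-r) * besselI α r * Real.exp ((α : ℝ) * b)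
      ≤ Real.exp (-r) * (Real.exp ((m:ℝ) * s) * bS (r/2) (r/2) m) := by
    rw [hI]
    have := mul_le_mul_of_nonneg_left (Real.exp_le_exp.2 hab) hInn
    calc Real.exp (-r) * bS (r/2) (r/2) m * Real.exp ((α : ℝ) * b)
        = Real.exp (-r) * (bS (r/2) (r/2) m * Real.exp ((α : ℝ) * b)) := by ring
      _ ≤ Real.exp (-r) * (bS (r/2) (r/2) m * Real.exp ((m:ℝ) * s)) := by
          apply mul_le_mul_of_nonneg_left _ (Real.exp_pos _).le
          exact mul_le_mul_of_nonneg_left (Real.exp_le_exp.2 hab) hInn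
      _ = Real.exp (-r) * (Real.exp ((m:ℝ) * s) * bS (r/2) (r/2) m) := by ring
  have step2 : Real.exp ((m:ℝ) * s) * bS (r/2) (r/2) m
      ≤ bS (r * Real.cosh s / 2) (r * Real.cosh s / 2) 0 := by
    rw [exp_mul_bS r s m]
    exact bS_le_bS_cosh r s hr.le m
  have step3 : bS (r * Real.cosh s / 2) (r * Real.cosh s / 2) 0
      ≤ Real.exp (r * Real.cosh s) * Real.sqrt (Real.pi / (2*(r * Real.cosh s))) / 2 :=
    bS_gauss _ hu
  have step4 : Real.sqrt (Real.pi / (2*(r * Real.cosh s))) ≤ Real.sqrt (Real.pi / (2*r)) := by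
    apply Real.sqrt_le_sqrt
    apply div_le_div_of_nonneg_left Real.pi_pos.le (by positivity)
    nlinarith
  have hch : Real.cosh s - 1 ≤ s^2 := cosh_sub_one_le s hs0 hs2
  calc Real.exp (-r) * besselI α r * Real.exp ((α : ℝ) * b)
      ≤ Real.exp (-r) * (Real.exp ((m:ℝ) * s) * bS (r/2) (r/2) m) := step1
    _ ≤ Real.exp (-r) * (Real.exp (r * Real.cosh s) * Real.sqrt (Real.pi / (2*r)) / 2) := by
        apply mul_le_mul_of_nonneg_left _ (Real.exp_pos _).le
        refine (step2.trans step3).trans ?_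
        gcongr
    _ = Real.exp (-r + r * Real.cosh s) * Real.sqrt (Real.pi / (2*r)) / 2 := by
        rw [Real.exp_add]
        ring
    _ ≤ Real.sqrt (Real.pi / (2*r)) * Real.exp (63 * r * b^2) := by
        have he : Real.exp (-r + r * Real.cosh s) ≤ Real.exp (63 * r * b^2) := by
          apply Real.exp_le_exp.2
          have h1 : r * (Real.cosh s - 1) ≤ r * s^2 := mul_le_mul_of_nonneg_left hch hr.le
          have h2 : r * b^2 ≤ 63 * (r * b^2) := by nlinarith [sq_nonneg b]
          rw [hsb] at h1
          nlinarith
        have hsq : 0 ≤ Real.sqrt (Real.pi / (2*r)) := Real.sqrt_nonneg _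
        nlinarith [Real.exp_pos (-r + r * Real.cosh s), Real.exp_pos (63 * r * b^2)]

lemma coord (Δx c t : ℝ) (hΔx : 0 < Δx) (hc : 0 < c) (ht : 0 < t) (α : ℤ) (b : ℝ)
    (hb1 : -(1/2) ≤ b) (hb2 : b ≤ 1/2) :
    Δx⁻¹ * (Real.exp (-(2*c*t/Δx^2)) * besselI α (2*c*t/Δx^2))
      ≤ Real.sqrt Real.pi * ((Real.sqrt (4*c*t))⁻¹
          * Real.exp (252*c*t/(2*Δx^2)*b^2 - (α:ℝ)*b)) := by
  set r := 2*c*t/Δx^2 with hrdef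
  have hr : 0 < r := by rw [hrdef]; positivity
  have hcore := coord_core r b hr hb1 hb2 α
  have h1 : Real.exp (-r) * besselI α r
      ≤ Real.sqrt (Real.pi/(2*r)) * Real.exp (63 * r * b^2 - (α:ℝ)*b) := by
    have h2 := mul_le_mul_of_nonneg_right hcore (Real.exp_pos (-((α:ℝ)*b))).le
    rw [mul_assoc, ← Real.exp_add, show (α:ℝ)*b + -((α:ℝ)*b) = 0 from by ring,
      Real.exp_zero, mul_one, mul_assoc, ← Real.exp_add,
      show 63 * r * b^2 + -((α:ℝ)*b) = 63 * r * b^2 - (α:ℝ)*b from by ring] at h2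
    exact h2
  have hsqrt : Real.sqrt (Real.pi/(2*r)) = Real.sqrt Real.pi * Δx / Real.sqrt (4*c*t) := by
    rw [show Real.pi/(2*r) = Real.pi * Δx^2 / (4*c*t) from by
      rw [hrdef]; field_simp; ring]
    rw [Real.sqrt_div (by positivity) (4*c*t), Real.sqrt_mul Real.pi_pos.le,
      Real.sqrt_sq hΔx.le]
  have hexp : 63 * r * b^2 = 252*c*t/(2*Δx^2)*b^2 := by
    rw [hrdef]
    field_simp
    ring
  calc Δx⁻¹ * (Real.exp (-r) * besselI α r)
      ≤ Δx⁻¹ * (Real.sqrt (Real.pi/(2*r)) * Real.exp (63 * r * b^2 - (α:ℝ)*b)) := by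
        apply mul_le_mul_of_nonneg_left h1 (by positivity)
    _ = Real.sqrt Real.pi * ((Real.sqrt (4*c*t))⁻¹
          * Real.exp (252*c*t/(2*Δx^2)*b^2 - (α:ℝ)*b)) := by
        rw [hsqrt, hexp]
        have h4 : Real.sqrt (4*c*t) ≠ 0 := by positivity
        field_simp

theorem stmt7 (d : ℕ) (hd : 1 ≤ d) (Δx : ℝ) (hΔx : 0 < Δx)
    (c : Fin d → ℝ) (hc : ∀ j, 0 < c j) (t : ℝ) (ht : 0 < t) (α : Fin d → ℤ)
    (b : Fin d → ℝ) (hb : ∀ j, b j ∈ Set.Icc (-(1/2) : ℝ) (1/2)) :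
    |heatKernel d Δx c α t|
      ≤ Real.pi ^ ((d : ℝ) / 2) *
        ∏ j : Fin d,
          (Real.sqrt (4 * c j * t))⁻¹
            * Real.exp (252 * c j * t / (2 * Δx ^ 2) * (b j) ^ 2 - (α j : ℝ) * b j) := by
  have hfac : ∀ j : Fin d, 0 ≤ Real.exp (-(2 * c j * t / Δx ^ 2))
      * besselI (α j) (2 * c j * t / Δx ^ 2) := by
    intro j
    apply mul_nonneg (Real.exp_pos _).le
    rw [besselI_eq_bS]
    have := hc j
    exact bS_nonneg (by positivity) (by positivity) _
  have hker_eq : heatKernel d Δx c α t = ∏ j : Fin d,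
      Δx⁻¹ * (Real.exp (-(2 * c j * t / Δx ^ 2)) * besselI (α j) (2 * c j * t / Δx ^ 2)) := by
    symm
    rw [Finset.prod_mul_distrib, Finset.prod_const, Finset.card_univ, Fintype.card_fin,
      inv_pow, heatKernel]
  have hker_nonneg : 0 ≤ heatKernel d Δx c α t := by
    rw [hker_eq]
    exact Finset.prod_nonneg fun j _ => mul_nonneg (by positivity) (hfac j)
  rw [abs_of_nonneg hker_nonneg, hker_eq]
  have hπd : Real.pi ^ ((d : ℝ) / 2) = (Real.sqrt Real.pi) ^ d := by
    rw [show ((d:ℝ)/2) = (1/2) * (d:ℝ) from by ring, Real.rpow_mul Real.pi_pos.le,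
      Real.rpow_natCast, ← Real.sqrt_eq_rpow]
  rw [hπd, show (Real.sqrt Real.pi)^d = ∏ _j : Fin d, Real.sqrt Real.pi from by
    rw [Finset.prod_const, Finset.card_univ, Fintype.card_fin], ← Finset.prod_mul_distrib]
  apply Finset.prod_le_prod
  · intro j _
    exact mul_nonneg (by positivity) (hfac j)
  · intro j _
    exact coord Δx (c j) t hΔx (hc j) ht (α j) (b j) (hb j).1 (hb j).2
end

section
/- Define L̃(t,z) := t^{−1/2} (1 + z²/t)^{−1} for t > 0 and z ∈ ℝ. For any 0 < s < t and x, y ∈ ℝ, the convolution integral I(x,y,s,t) := ∫_ℝ L̃(t−s, x−z) L̃(s, z−y) dz satisfies I(x,y,s,t) ≤ √2 · π · L̃(t, x − y). -/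
/-- The (unnormalized) Cauchy–Lorentz kernel with scale `√t`:
`L̃(t,z) = t^{-1/2} (1 + z²/t)⁻¹`. -/
noncomputable def Ltilde (t z : ℝ) : ℝ := (Real.sqrt t)⁻¹ * (1 + z ^ 2 / t)⁻¹

open Real MeasureTheory Filter Set Topology


section
variable (a b v : ℝ)

lemma ratio_tendsto (ha : 0 < a) (l : Filter ℝ)
    (h0 : Tendsto (fun u : ℝ => u⁻¹) l (𝓝 0)) (hne : ∀ᶠ u in l, u ≠ 0) :
    Tendsto (fun u => (b ^ 2 + u ^ 2) / (a ^ 2 + (v - u) ^ 2)) l (𝓝 1) := by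
  have hg : ContinuousAt (fun w : ℝ => (b ^ 2 * w ^ 2 + 1) / (a ^ 2 * w ^ 2 + (v * w - 1) ^ 2)) 0 := by
    apply ContinuousAt.div
    · fun_prop
    · fun_prop
    · norm_num
  have h1 : Tendsto (fun u : ℝ => (b ^ 2 * (u⁻¹) ^ 2 + 1) / (a ^ 2 * (u⁻¹) ^ 2 + (v * u⁻¹ - 1) ^ 2)) l
      (𝓝 1) := by
    have h := hg.tendsto.comp h0
    simp only [Function.comp_def] at h
    convert h using 2
    norm_num
  refine h1.congr' ?_
  filter_upwards [hne] with u hu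
  have hu2 : u ^ 2 ≠ 0 := pow_ne_zero _ hu
  have hden : a ^ 2 + (v - u) ^ 2 ≠ 0 := by positivity
  field_simp
end

lemma kernel_eq (a u : ℝ) (ha : 0 < a) :
    a * (a ^ 2 + u ^ 2)⁻¹ = a⁻¹ * (1 + (u / a) ^ 2)⁻¹ := by
  have h1 : a ^ 2 + u ^ 2 > 0 := by positivity
  field_simp

lemma integrable_kernel (a : ℝ) (ha : 0 < a) :
    Integrable fun u : ℝ => a * (a ^ 2 + u ^ 2)⁻¹ := by
  have h := (integrable_inv_one_add_sq.comp_div (R := a) ha.ne').const_mul a⁻¹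
  refine h.congr (Eventually.of_forall fun u => ?_)
  simp only []
  rw [kernel_eq a u ha]

lemma integral_kernel (a : ℝ) (ha : 0 < a) :
    ∫ u : ℝ, a * (a ^ 2 + u ^ 2)⁻¹ = π := by
  have : ∀ u : ℝ, a * (a ^ 2 + u ^ 2)⁻¹ = a⁻¹ * (1 + (u / a) ^ 2)⁻¹ :=
    fun u => kernel_eq a u ha
  rw [integral_congr_ae (Eventually.of_forall this), integral_const_mul,
    Measure.integral_comp_div (fun x : ℝ => (1 + x ^ 2)⁻¹) a,
    integral_univ_inv_one_add_sq, abs_of_pos ha, smul_eq_mul]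
  field_simp

lemma hasDerivAt_F (a b v : ℝ) (ha : 0 < a) (hb : 0 < b) (c1 c2 c3 : ℝ) (u : ℝ) :
    HasDerivAt (fun u : ℝ => c1 * arctan (u / b) + c3 * arctan ((u - v) / a)
        + c2 * (Real.log (b ^ 2 + u ^ 2) - Real.log (a ^ 2 + (v - u) ^ 2)))
      (c1 * ((1 + (u / b) ^ 2)⁻¹ * (1 / b)) + c3 * ((1 + ((u - v) / a) ^ 2)⁻¹ * (1 / a))
        + c2 * ((b ^ 2 + u ^ 2)⁻¹ * (2 * u) - (a ^ 2 + (v - u) ^ 2)⁻¹ * (2 * (v - u) * (-1)))) u := by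
  have hb2 : (0:ℝ) < b ^ 2 + u ^ 2 := by positivity
  have ha2 : (0:ℝ) < a ^ 2 + (v - u) ^ 2 := by positivity
  have d1 : HasDerivAt (fun u : ℝ => arctan (u / b)) ((1 + (u / b) ^ 2)⁻¹ * (1 / b)) u :=
    ((hasDerivAt_arctan' (u / b)).comp u ((hasDerivAt_id u).div_const b) :)
  have d2 : HasDerivAt (fun u : ℝ => arctan ((u - v) / a)) ((1 + ((u - v) / a) ^ 2)⁻¹ * (1 / a)) u :=
    ((hasDerivAt_arctan' ((u - v) / a)).comp u (((hasDerivAt_id u).sub_const v).div_const a) :)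
  have i3 : HasDerivAt (fun u : ℝ => b ^ 2 + u ^ 2) (2 * u) u := by
    simpa using (hasDerivAt_pow 2 u).const_add (b ^ 2)
  have d3 : HasDerivAt (fun u : ℝ => Real.log (b ^ 2 + u ^ 2)) ((b ^ 2 + u ^ 2)⁻¹ * (2 * u)) u :=
    ((Real.hasDerivAt_log hb2.ne').comp u i3 :)
  have i4 : HasDerivAt (fun u : ℝ => a ^ 2 + (v - u) ^ 2) (2 * (v - u) * (-1)) u := by
    have h0 : HasDerivAt (fun u : ℝ => v - u) (-1) u := (hasDerivAt_id u).const_sub v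
    simpa using (h0.pow 2).const_add (a ^ 2)
  have d4 : HasDerivAt (fun u : ℝ => Real.log (a ^ 2 + (v - u) ^ 2))
      ((a ^ 2 + (v - u) ^ 2)⁻¹ * (2 * (v - u) * (-1))) u :=
    ((Real.hasDerivAt_log ha2.ne').comp u i4 :)
  exact ((d1.const_mul c1).add (d2.const_mul c3)).add ((d3.sub d4).const_mul c2)

lemma deriv_eq_f (a b v u c1 c2 c3 : ℝ) (ha : 0 < a) (hb : 0 < b)
    (h2 : 0 < (a - b) ^ 2 + v ^ 2)
    (hc1 : c1 = a * ((a + b) ^ 2 + v ^ 2)⁻¹ * ((a - b) ^ 2 + v ^ 2)⁻¹ * (a ^ 2 + v ^ 2 - b ^ 2))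
    (hc3 : c3 = b * ((a + b) ^ 2 + v ^ 2)⁻¹ * ((a - b) ^ 2 + v ^ 2)⁻¹ * (b ^ 2 + v ^ 2 - a ^ 2))
    (hc2 : c2 = a * b * v * ((a + b) ^ 2 + v ^ 2)⁻¹ * ((a - b) ^ 2 + v ^ 2)⁻¹) :
    c1 * ((1 + (u / b) ^ 2)⁻¹ * (1 / b))
      + c3 * ((1 + ((u - v) / a) ^ 2)⁻¹ * (1 / a))
      + c2 * ((b ^ 2 + u ^ 2)⁻¹ * (2 * u) - (a ^ 2 + (v - u) ^ 2)⁻¹ * (2 * (v - u) * (-1)))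
      = (a * (a ^ 2 + (v - u) ^ 2)⁻¹) * (b * (b ^ 2 + u ^ 2)⁻¹) := by
  subst hc1 hc2 hc3
  have h1 : (0:ℝ) < (a + b) ^ 2 + v ^ 2 := by positivity
  have h3 : (0:ℝ) < b ^ 2 + u ^ 2 := by positivity
  have h4 : (0:ℝ) < a ^ 2 + (v - u) ^ 2 := by positivity
  field_simp
  ring

lemma continuous_f (a b v : ℝ) (ha : 0 < a) (hb : 0 < b) :
    Continuous fun u : ℝ => (a * (a ^ 2 + (v - u) ^ 2)⁻¹) * (b * (b ^ 2 + u ^ 2)⁻¹) := by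
  apply Continuous.mul
  · exact continuous_const.mul ((continuous_const.add
      ((continuous_const.sub continuous_id).pow 2)).inv₀ (fun x => (by positivity : (0:ℝ) < a ^ 2 + (v - x) ^ 2).ne'))
  · exact continuous_const.mul ((continuous_const.add (continuous_id.pow 2)).inv₀
      (fun x => (by positivity : (0:ℝ) < b ^ 2 + x ^ 2).ne'))

lemma integrable_f (a b v : ℝ) (ha : 0 < a) (hb : 0 < b) :
    Integrable fun u : ℝ => (a * (a ^ 2 + (v - u) ^ 2)⁻¹) * (b * (b ^ 2 + u ^ 2)⁻¹) := by
  apply Integrable.mono' (((integrable_kernel b hb).const_mul a⁻¹))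
    (continuous_f a b v ha hb).aestronglyMeasurable
  refine Eventually.of_forall fun u => ?_
  have h4 : (0:ℝ) < a ^ 2 + (v - u) ^ 2 := by positivity
  have h3 : (0:ℝ) < b ^ 2 + u ^ 2 := by positivity
  rw [Real.norm_eq_abs, abs_of_nonneg (by positivity)]
  have hle : a * (a ^ 2 + (v - u) ^ 2)⁻¹ ≤ a⁻¹ := by
    rw [mul_inv_le_iff₀ h4, ← div_le_iff₀' (by positivity)]
    calc a / a⁻¹ = a ^ 2 := by field_simp
    _ ≤ a ^ 2 + (v - u) ^ 2 := by nlinarith [sq_nonneg (v - u)]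
  calc a * (a ^ 2 + (v - u) ^ 2)⁻¹ * (b * (b ^ 2 + u ^ 2)⁻¹)
      ≤ a⁻¹ * (b * (b ^ 2 + u ^ 2)⁻¹) := by
        apply mul_le_mul_of_nonneg_right hle (by positivity)
  _ = a⁻¹ * (b * (b ^ 2 + u ^ 2)⁻¹) := rfl

lemma cauchy_conv (a b v : ℝ) (ha : 0 < a) (hb : 0 < b)
    (h2 : 0 < (a - b) ^ 2 + v ^ 2) :
    ∫ u : ℝ, (a * (a ^ 2 + (v - u) ^ 2)⁻¹) * (b * (b ^ 2 + u ^ 2)⁻¹)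
      = π * (a + b) / ((a + b) ^ 2 + v ^ 2) := by
  have h1 : (0:ℝ) < (a + b) ^ 2 + v ^ 2 := by positivity
  set c1 : ℝ := a * ((a + b) ^ 2 + v ^ 2)⁻¹ * ((a - b) ^ 2 + v ^ 2)⁻¹ * (a ^ 2 + v ^ 2 - b ^ 2) with hc1
  set c3 : ℝ := b * ((a + b) ^ 2 + v ^ 2)⁻¹ * ((a - b) ^ 2 + v ^ 2)⁻¹ * (b ^ 2 + v ^ 2 - a ^ 2) with hc3
  set c2 : ℝ := a * b * v * ((a + b) ^ 2 + v ^ 2)⁻¹ * ((a - b) ^ 2 + v ^ 2)⁻¹ with hc2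
  set F : ℝ → ℝ := fun u => c1 * arctan (u / b) + c3 * arctan ((u - v) / a)
      + c2 * (Real.log (b ^ 2 + u ^ 2) - Real.log (a ^ 2 + (v - u) ^ 2)) with hF
  have hderiv : ∀ u : ℝ, HasDerivAt F
      ((a * (a ^ 2 + (v - u) ^ 2)⁻¹) * (b * (b ^ 2 + u ^ 2)⁻¹)) u := by
    intro u
    have := hasDerivAt_F a b v ha hb c1 c2 c3 u
    rwa [deriv_eq_f a b v u c1 c2 c3 ha hb h2 hc1 hc3 hc2] at this
  have hint := integrable_f a b v ha hb
  -- limits of the log part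
  have hlog_top : Tendsto (fun u : ℝ => Real.log (b ^ 2 + u ^ 2) - Real.log (a ^ 2 + (v - u) ^ 2))
      atTop (𝓝 0) := by
    have hr := ratio_tendsto a b v ha atTop tendsto_inv_atTop_zero
      ((eventually_gt_atTop 0).mono fun u hu => hu.ne')
    have := (Real.continuousAt_log one_ne_zero).tendsto.comp hr
    rw [Real.log_one] at this
    refine this.congr (fun u => ?_)
    have h3 : (0:ℝ) < b ^ 2 + u ^ 2 := by positivity
    have h4 : (0:ℝ) < a ^ 2 + (v - u) ^ 2 := by positivity
    simp only [Function.comp]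
    rw [Real.log_div h3.ne' h4.ne']
  have hlog_bot : Tendsto (fun u : ℝ => Real.log (b ^ 2 + u ^ 2) - Real.log (a ^ 2 + (v - u) ^ 2))
      atBot (𝓝 0) := by
    have hinvbot : Tendsto (fun u : ℝ => u⁻¹) atBot (𝓝 0) := by
      have h2 : Tendsto (fun u : ℝ => (-u)⁻¹) atBot (𝓝 0) := by
        apply Filter.Tendsto.inv_tendsto_atTop
        exact tendsto_neg_atBot_atTop
      have h3 := h2.neg
      rw [neg_zero] at h3
      refine h3.congr (fun u => ?_)
      rw [← inv_neg, neg_neg]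
    have hr := ratio_tendsto a b v ha atBot hinvbot
      ((eventually_lt_atBot 0).mono fun u hu => hu.ne)
    have := (Real.continuousAt_log one_ne_zero).tendsto.comp hr
    rw [Real.log_one] at this
    refine this.congr (fun u => ?_)
    have h3 : (0:ℝ) < b ^ 2 + u ^ 2 := by positivity
    have h4 : (0:ℝ) < a ^ 2 + (v - u) ^ 2 := by positivity
    simp only [Function.comp]
    rw [Real.log_div h3.ne' h4.ne']
  have harc1_top : Tendsto (fun u : ℝ => arctan (u / b)) atTop (𝓝 (π / 2)) :=
    (tendsto_nhds_of_tendsto_nhdsWithin tendsto_arctan_atTop).comp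
      (tendsto_id.atTop_div_const hb)
  have harc2_top : Tendsto (fun u : ℝ => arctan ((u - v) / a)) atTop (𝓝 (π / 2)) :=
    (tendsto_nhds_of_tendsto_nhdsWithin tendsto_arctan_atTop).comp
      ((tendsto_atTop_add_const_right atTop (-v) tendsto_id).atTop_div_const ha |>.congr
        (fun u => by simp only [id_eq]; ring))
  have harc1_bot : Tendsto (fun u : ℝ => arctan (u / b)) atBot (𝓝 (-(π / 2))) :=
    (tendsto_nhds_of_tendsto_nhdsWithin tendsto_arctan_atBot).comp
      (tendsto_id.atBot_div_const hb)
  have harc2_bot : Tendsto (fun u : ℝ => arctan ((u - v) / a)) atBot (𝓝 (-(π / 2))) :=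
    (tendsto_nhds_of_tendsto_nhdsWithin tendsto_arctan_atBot).comp
      ((tendsto_atBot_add_const_right atBot (-v) tendsto_id).atBot_div_const ha |>.congr
        (fun u => by simp only [id_eq]; ring))
  have hFtop : Tendsto F atTop (𝓝 (c1 * (π / 2) + c3 * (π / 2) + c2 * 0)) :=
    ((harc1_top.const_mul c1).add (harc2_top.const_mul c3)).add (hlog_top.const_mul c2)
  have hFbot : Tendsto F atBot (𝓝 (c1 * (-(π / 2)) + c3 * (-(π / 2)) + c2 * 0)) :=
    ((harc1_bot.const_mul c1).add (harc2_bot.const_mul c3)).add (hlog_bot.const_mul c2)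
  have hIic := integral_Iic_of_hasDerivAt_of_tendsto' (a := 0)
    (fun x _ => hderiv x) hint.integrableOn hFbot
  have hIoi := integral_Ioi_of_hasDerivAt_of_tendsto' (a := 0)
    (fun x _ => hderiv x) hint.integrableOn hFtop
  rw [← intervalIntegral.integral_Iic_add_Ioi hint.integrableOn hint.integrableOn, hIic, hIoi]
  have : F 0 - (c1 * (-(π / 2)) + c3 * (-(π / 2)) + c2 * 0)
      + (c1 * (π / 2) + c3 * (π / 2) + c2 * 0 - F 0) = π * (c1 + c3) := by ring
  rw [this, hc1, hc3]
  field_simp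
  ring

lemma Ltilde_eq (τ z : ℝ) (hτ : 0 < τ) :
    (Real.sqrt τ)⁻¹ * (1 + z ^ 2 / τ)⁻¹ = Real.sqrt τ * (τ + z ^ 2)⁻¹ := by
  have h1 : (1 + z ^ 2 / τ) = (τ + z ^ 2) / τ := by field_simp
  rw [h1, inv_div, div_eq_mul_inv, ← mul_assoc]
  congr 1
  rw [inv_mul_eq_div, Real.div_sqrt]

lemma conv_bound (a b v : ℝ) (ha : 0 < a) (hb : 0 < b) :
    ∫ u : ℝ, (a * (a ^ 2 + (v - u) ^ 2)⁻¹) * (b * (b ^ 2 + u ^ 2)⁻¹)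
      ≤ Real.sqrt 2 * π * (Real.sqrt (a ^ 2 + b ^ 2) * ((a ^ 2 + b ^ 2) + v ^ 2)⁻¹) := by
  by_cases hd : a = b ∧ v = 0
  · obtain ⟨rfl, rfl⟩ := hd
    have key : ∀ u : ℝ, (a * (a ^ 2 + (0 - u) ^ 2)⁻¹) * (a * (a ^ 2 + u ^ 2)⁻¹)
        ≤ a⁻¹ * (a * (a ^ 2 + u ^ 2)⁻¹) := by
      intro u
      have h3 : (0:ℝ) < a ^ 2 + u ^ 2 := by positivity
      have h4 : (0:ℝ) < a ^ 2 + (0 - u) ^ 2 := by positivity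
      have hle : a * (a ^ 2 + (0 - u) ^ 2)⁻¹ ≤ a⁻¹ := by
        rw [mul_inv_le_iff₀ h4, ← div_le_iff₀' (by positivity)]
        calc a / a⁻¹ = a ^ 2 := by field_simp
        _ ≤ a ^ 2 + (0 - u) ^ 2 := by nlinarith [sq_nonneg (0 - u)]
      exact mul_le_mul_of_nonneg_right hle (by positivity)
    have h1 := integral_mono (integrable_f a a 0 ha ha)
      ((integrable_kernel a ha).const_mul a⁻¹) key
    rw [integral_const_mul, integral_kernel a ha] at h1
    refine h1.trans_eq ?_
    have h2 : Real.sqrt (a ^ 2 + a ^ 2) = Real.sqrt 2 * a := by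
      rw [show a ^ 2 + a ^ 2 = 2 * a ^ 2 by ring, Real.sqrt_mul (by norm_num),
        Real.sqrt_sq ha.le]
    rw [h2]
    have h2' : Real.sqrt 2 * Real.sqrt 2 = 2 := Real.mul_self_sqrt (by norm_num)
    field_simp
    have h2'' : Real.sqrt 2 ^ 2 = 2 := Real.sq_sqrt (by norm_num)
    linear_combination (-a ^ 2) * h2''
  · have h2 : 0 < (a - b) ^ 2 + v ^ 2 := by
      rcases eq_or_ne a b with h | h
      · have hv : v ≠ 0 := fun hv => hd ⟨h, hv⟩
        positivity
      · have := sub_ne_zero.mpr h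
        positivity
    rw [cauchy_conv a b v ha hb h2]
    have hab : a + b ≤ Real.sqrt 2 * Real.sqrt (a ^ 2 + b ^ 2) := by
      rw [← Real.sqrt_mul (by norm_num)]
      rw [Real.le_sqrt (by positivity) (by positivity)]
      nlinarith [sq_nonneg (a - b)]
    have hden : (0:ℝ) < a ^ 2 + b ^ 2 + v ^ 2 := by positivity
    have hden2 : (0:ℝ) < (a + b) ^ 2 + v ^ 2 := by positivity
    have hdle : a ^ 2 + b ^ 2 + v ^ 2 ≤ (a + b) ^ 2 + v ^ 2 := by nlinarith
    calc π * (a + b) / ((a + b) ^ 2 + v ^ 2)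
        ≤ π * (Real.sqrt 2 * Real.sqrt (a ^ 2 + b ^ 2)) / ((a + b) ^ 2 + v ^ 2) := by
          gcongr
      _ ≤ π * (Real.sqrt 2 * Real.sqrt (a ^ 2 + b ^ 2)) / (a ^ 2 + b ^ 2 + v ^ 2) := by
          gcongr
      _ = Real.sqrt 2 * π * (Real.sqrt (a ^ 2 + b ^ 2) * ((a ^ 2 + b ^ 2) + v ^ 2)⁻¹) := by
          rw [div_eq_mul_inv]
          ring
theorem stmt14 (s t x y : ℝ) (hs : 0 < s) (hst : s < t) :
    (∫ z : ℝ, Ltilde (t - s) (x - z) * Ltilde s (z - y))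
      ≤ Real.sqrt 2 * Real.pi * Ltilde t (x - y) := by
  have ht : 0 < t := hs.trans hst
  have hts : 0 < t - s := by linarith
  have ha : 0 < Real.sqrt (t - s) := Real.sqrt_pos.mpr hts
  have hb : 0 < Real.sqrt s := Real.sqrt_pos.mpr hs
  have key := conv_bound (Real.sqrt (t - s)) (Real.sqrt s) (x - y) ha hb
  rw [Real.sq_sqrt hts.le, Real.sq_sqrt hs.le, show t - s + s = t by ring] at key
  have hL : (∫ z : ℝ, Ltilde (t - s) (x - z) * Ltilde s (z - y))
      = ∫ u : ℝ, (Real.sqrt (t - s) * ((t - s) + (x - y - u) ^ 2)⁻¹)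
          * (Real.sqrt s * (s + u ^ 2)⁻¹) := by
    rw [← integral_sub_right_eq_self
      (fun u : ℝ => (Real.sqrt (t - s) * ((t - s) + (x - y - u) ^ 2)⁻¹)
        * (Real.sqrt s * (s + u ^ 2)⁻¹)) y]
    congr 1
    ext z
    show Ltilde (t - s) (x - z) * Ltilde s (z - y) = _
    unfold Ltilde
    rw [Ltilde_eq (t - s) (x - z) hts, Ltilde_eq s (z - y) hs,
      show x - y - (z - y) = x - z by ring]
  rw [hL]
  unfold Ltilde
  rw [Ltilde_eq t (x - y) ht]
  exact key
end

section
/- Let Δx > 0, let α, β ∈ ℤ, set x_α := αΔx, x_β := βΔx, fix 0 < s < t, and define g(z) := L̃(t−s, x_α − z) · L̃(s, x_β − z) for z ∈ ℝ, where L̃(τ,z) := τ^{−1/2}(1 + z²/τ)^{−1}. Then Σ_{η ∈ ℤ, η ≠ α, η ≠ β} g(x_η) Δx ≤ e^8 · I(x_α, x_β, s, t), where I(x,y,s,t) := ∫_ℝ L̃(t−s, x−z) L̃(s, z−y) dz. -/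
lemma Ltilde_pos {t z : ℝ} (ht : 0 < t) : 0 < Ltilde t z := by
  have h1 : 0 < (Real.sqrt t)⁻¹ := inv_pos.2 (Real.sqrt_pos.2 ht)
  have h2 : 0 < 1 + z ^ 2 / t := by positivity
  exact mul_pos h1 (inv_pos.2 h2)

lemma Ltilde_le_four {τ a b : ℝ} (hτ : 0 < τ) (h : b ^ 2 ≤ 4 * a ^ 2) :
    Ltilde τ a ≤ 4 * Ltilde τ b := by
  unfold Ltilde
  rw [show 4 * ((Real.sqrt τ)⁻¹ * (1 + b ^ 2 / τ)⁻¹)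
      = (Real.sqrt τ)⁻¹ * (4 * (1 + b ^ 2 / τ)⁻¹) by ring]
  have hsq : 0 ≤ (Real.sqrt τ)⁻¹ := by positivity
  refine mul_le_mul_of_nonneg_left ?_ hsq
  have hu : (0:ℝ) < 1 + a ^ 2 / τ := by positivity
  have hv : (0:ℝ) < 1 + b ^ 2 / τ := by positivity
  rw [inv_eq_one_div, inv_eq_one_div, show 4 * (1 / (1 + b ^ 2 / τ)) = 4 / (1 + b ^ 2 / τ) by ring,
    div_le_div_iff₀ hu hv]
  have : b ^ 2 / τ ≤ 4 * (a ^ 2 / τ) := by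
    rw [← mul_div_assoc]
    exact div_le_div_of_nonneg_right h hτ.le
  nlinarith

lemma Ltilde_continuous {t : ℝ} (ht : 0 < t) : Continuous (Ltilde t) := by
  unfold Ltilde
  refine continuous_const.mul (Continuous.inv₀ (by fun_prop) ?_)
  intro z
  positivity

lemma Ltilde_le {t z : ℝ} (ht : 0 < t) : Ltilde t z ≤ (Real.sqrt t)⁻¹ := by
  unfold Ltilde
  have h2 : (1 + z ^ 2 / t)⁻¹ ≤ 1 := by
    rw [inv_le_one_iff₀]
    right; nlinarith [sq_nonneg z, div_nonneg (sq_nonneg z) ht.le]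
  calc (Real.sqrt t)⁻¹ * (1 + z ^ 2 / t)⁻¹ ≤ (Real.sqrt t)⁻¹ * 1 := by
        exact mul_le_mul_of_nonneg_left h2 (by positivity)
    _ = (Real.sqrt t)⁻¹ := mul_one _

lemma Ltilde_integrable {t c : ℝ} (ht : 0 < t) :
    MeasureTheory.Integrable (fun z : ℝ => Ltilde t (z - c)) := by
  have hsq : Real.sqrt t ≠ 0 := ne_of_gt (Real.sqrt_pos.2 ht)
  have h0 : MeasureTheory.Integrable (fun z : ℝ => (1 + z ^ 2)⁻¹) := integrable_inv_one_add_sq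
  have h1 : MeasureTheory.Integrable (fun z : ℝ => (1 + (z / Real.sqrt t) ^ 2)⁻¹) :=
    h0.comp_div hsq
  have h2 : MeasureTheory.Integrable (fun z : ℝ => (1 + z ^ 2 / t)⁻¹) := by
    refine h1.congr (Filter.Eventually.of_forall fun z => ?_)
    simp only []; rw [div_pow, Real.sq_sqrt ht.le]
  have h3 := (h2.const_mul ((Real.sqrt t)⁻¹)).comp_sub_right c
  exact h3.congr (Filter.Eventually.of_forall fun z => rfl)

lemma grid_sq {Δx : ℝ} (hΔx : 0 < Δx) {γ η : ℤ} (h : γ ≠ η) :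
    Δx ^ 2 ≤ ((γ : ℝ) * Δx - (η : ℝ) * Δx) ^ 2 := by
  have h1 : (1:ℝ) ≤ |(γ : ℝ) - (η : ℝ)| := by
    have h0 := Int.one_le_abs (sub_ne_zero.2 h)
    rw [← Int.cast_sub, ← Int.cast_abs]
    exact_mod_cast h0
  have h2 : (1:ℝ) ≤ ((γ : ℝ) - (η : ℝ)) ^ 2 := by nlinarith [sq_abs ((γ:ℝ) - (η:ℝ))]
  have h3 : ((γ : ℝ) * Δx - (η : ℝ) * Δx) ^ 2 = ((γ : ℝ) - (η : ℝ)) ^ 2 * Δx ^ 2 := by ring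
  rw [h3]; nlinarith [sq_nonneg Δx]

lemma sq_bound {Δx N z G : ℝ} (hΔx : 0 < Δx) (hz1 : N < z) (hz2 : z ≤ N + Δx)
    (hG : Δx ^ 2 ≤ (G - N) ^ 2) : (G - z) ^ 2 ≤ 4 * (G - N) ^ 2 := by
  nlinarith [sq_nonneg (G + z - 2 * N), sq_nonneg (z - N), sq_nonneg (G - z)]

theorem stmt15 (Δx : ℝ) (hΔx : 0 < Δx) (α β : ℤ) (s t : ℝ) (hs : 0 < s) (hst : s < t) :
    (∑' η : ℤ,
        (if η ≠ α ∧ η ≠ β then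
            Ltilde (t - s) ((α : ℝ) * Δx - (η : ℝ) * Δx)
              * Ltilde s ((β : ℝ) * Δx - (η : ℝ) * Δx)
          else 0) * Δx)
      ≤ Real.exp 8
          * ∫ z : ℝ, Ltilde (t - s) ((α : ℝ) * Δx - z) * Ltilde s (z - (β : ℝ) * Δx) := by
  have hτ : 0 < t - s := sub_pos.2 hst
  set f : ℝ → ℝ := fun z => Ltilde (t - s) ((α : ℝ) * Δx - z) * Ltilde s (z - (β : ℝ) * Δx)
    with hfdef
  have hfpos : ∀ z, 0 < f z := fun z => mul_pos (Ltilde_pos hτ) (Ltilde_pos hs)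
  have hfint : MeasureTheory.Integrable f := by
    refine MeasureTheory.Integrable.bdd_mul (c := (Real.sqrt (t - s))⁻¹) (Ltilde_integrable hs) ?_ ?_
    · exact ((Ltilde_continuous hτ).comp (continuous_const.sub continuous_id)).aestronglyMeasurable
    · refine Filter.Eventually.of_forall fun z => ?_
      rw [Real.norm_eq_abs, abs_of_nonneg (Ltilde_pos hτ).le]
      exact Ltilde_le hτ
  have hint_nonneg : 0 ≤ ∫ z, f z := MeasureTheory.integral_nonneg fun z => (hfpos z).le
  have hexp : (16:ℝ) ≤ Real.exp 8 := by
    have h4 : (5:ℝ) ≤ Real.exp 4 := by nlinarith [Real.add_one_le_exp (4:ℝ)]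
    have h8 : Real.exp 4 * Real.exp 4 = Real.exp 8 := by
      rw [← Real.exp_add]; norm_num
    nlinarith [Real.exp_pos (4:ℝ)]
  -- the interval attached to each grid point
  set I : ℤ → Set ℝ := fun η => Set.Ioc ((η : ℝ) * Δx) ((η : ℝ) * Δx + Δx) with hIdef
  have hImeas : ∀ η : ℤ, MeasurableSet (I η) := fun η => measurableSet_Ioc
  have hIvol : ∀ η : ℤ, (MeasureTheory.volume (I η)).toReal = Δx := by
    intro η
    rw [hIdef]
    simp [Real.volume_Ioc, ENNReal.toReal_ofReal hΔx.le]
  -- per-term bound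
  have hterm : ∀ η : ℤ,
      (if η ≠ α ∧ η ≠ β then
          Ltilde (t - s) ((α : ℝ) * Δx - (η : ℝ) * Δx)
            * Ltilde s ((β : ℝ) * Δx - (η : ℝ) * Δx)
        else 0) * Δx ≤ 16 * ∫ z in I η, f z := by
    intro η
    have hIint : MeasureTheory.IntegrableOn f (I η) := hfint.integrableOn
    have hIpos : 0 ≤ ∫ z in I η, f z :=
      MeasureTheory.setIntegral_nonneg (hImeas η) fun z _ => (hfpos z).le
    by_cases hcond : η ≠ α ∧ η ≠ β
    · rw [if_pos hcond]
      set c : ℝ := Ltilde (t - s) ((α : ℝ) * Δx - (η : ℝ) * Δx)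
          * Ltilde s ((β : ℝ) * Δx - (η : ℝ) * Δx) with hcdef
      have hkey : ∀ z ∈ I η, c / 16 ≤ f z := by
        intro z hz
        obtain ⟨hz1, hz2⟩ := hz
        have hA : ((α : ℝ) * Δx - z) ^ 2 ≤ 4 * ((α : ℝ) * Δx - (η : ℝ) * Δx) ^ 2 :=
          sq_bound hΔx hz1 hz2 (grid_sq hΔx (Ne.symm hcond.1))
        have hB : (z - (β : ℝ) * Δx) ^ 2 ≤ 4 * ((β : ℝ) * Δx - (η : ℝ) * Δx) ^ 2 := by
          have := sq_bound hΔx hz1 hz2 (grid_sq hΔx (Ne.symm hcond.2))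
          nlinarith [this]
        have h1 : Ltilde (t - s) ((α : ℝ) * Δx - (η : ℝ) * Δx)
            ≤ 4 * Ltilde (t - s) ((α : ℝ) * Δx - z) := Ltilde_le_four hτ hA
        have h2 : Ltilde s ((β : ℝ) * Δx - (η : ℝ) * Δx)
            ≤ 4 * Ltilde s (z - (β : ℝ) * Δx) := Ltilde_le_four hs hB
        have hp1 : 0 < Ltilde (t - s) ((α : ℝ) * Δx - (η : ℝ) * Δx) := Ltilde_pos hτ
        have hp2 : 0 < Ltilde s ((β : ℝ) * Δx - (η : ℝ) * Δx) := Ltilde_pos hs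
        have hp3 : 0 < Ltilde (t - s) ((α : ℝ) * Δx - z) := Ltilde_pos hτ
        have hp4 : 0 < Ltilde s (z - (β : ℝ) * Δx) := Ltilde_pos hs
        rw [hcdef, div_le_iff₀ (by norm_num : (0:ℝ) < 16)]
        calc Ltilde (t - s) ((α : ℝ) * Δx - (η : ℝ) * Δx)
              * Ltilde s ((β : ℝ) * Δx - (η : ℝ) * Δx)
            ≤ (4 * Ltilde (t - s) ((α : ℝ) * Δx - z)) * (4 * Ltilde s (z - (β : ℝ) * Δx)) := by
              apply mul_le_mul h1 h2 hp2.le; positivity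
          _ = f z * 16 := by rw [hfdef]; ring
      have := MeasureTheory.setIntegral_ge_of_const_le (μ := MeasureTheory.volume)
        (hImeas η) (by rw [hIdef]; simp [Real.volume_Ioc]) hkey hIint
      rw [MeasureTheory.measureReal_def, hIvol η, smul_eq_mul] at this
      have hc : 0 < c := mul_pos (Ltilde_pos hτ) (Ltilde_pos hs)
      nlinarith [this]
    · rw [if_neg hcond, zero_mul]
      positivity
  refine tsum_le_of_sum_le' (mul_nonneg (Real.exp_pos 8).le hint_nonneg) fun u => ?_
  have hdisj : Set.Pairwise (↑u) (Function.onFun Disjoint I) := by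
    intro m _ n _ hmn
    rw [Function.onFun, hIdef]
    rw [Set.Ioc_disjoint_Ioc]
    rcases hmn.lt_or_gt with h | h
    · have : (m : ℝ) + 1 ≤ (n : ℝ) := by exact_mod_cast Int.add_one_le_iff.2 h
      refine le_trans (min_le_left _ _) (le_trans ?_ (le_max_right _ _))
      nlinarith
    · have : (n : ℝ) + 1 ≤ (m : ℝ) := by exact_mod_cast Int.add_one_le_iff.2 h
      refine le_trans (min_le_right _ _) (le_trans ?_ (le_max_left _ _))
      nlinarith
  calc (∑ η ∈ u, (if η ≠ α ∧ η ≠ β then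
          Ltilde (t - s) ((α : ℝ) * Δx - (η : ℝ) * Δx)
            * Ltilde s ((β : ℝ) * Δx - (η : ℝ) * Δx)
        else 0) * Δx)
      ≤ ∑ η ∈ u, 16 * ∫ z in I η, f z := Finset.sum_le_sum fun η _ => hterm η
    _ = 16 * ∑ η ∈ u, ∫ z in I η, f z := by rw [Finset.mul_sum]
    _ = 16 * ∫ z in ⋃ η ∈ u, I η, f z := by
        rw [MeasureTheory.integral_biUnion_finset u (fun i _ => hImeas i) hdisj
          (fun i _ => hfint.integrableOn)]
    _ ≤ 16 * ∫ z, f z := by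
        refine mul_le_mul_of_nonneg_left ?_ (by norm_num)
        exact MeasureTheory.setIntegral_le_integral hfint
          (Filter.Eventually.of_forall fun z => (hfpos z).le)
    _ ≤ Real.exp 8 * ∫ z, f z := mul_le_mul_of_nonneg_right hexp hint_nonneg
end
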